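/- arXiv:2412.02810 — 10 statements merged into one kernel-verified Lean document; each statement's English description precedes it below -/
import Mathlib

section
/- A concept class H has an infinite eluder sequence if and only if H is infinite. -/
lemma eluder_step_lemma {X : Type*} {S : Set (X → Bool)} (hS : S.Infinite) :
    ∃ p : X × Bool, {h ∈ S | h p.1 = p.2}.Infinite ∧ ∃ h ∈ S, h p.1 ≠ p.2 := by
  obtain ⟨f, hf, g, hg, hfg⟩ := hS.nontrivial
  obtain ⟨x, hx⟩ := Function.ne_iff.mp hfg
  have hsplit : S ⊆ {h ∈ S | h x = true} ∪ {h ∈ S | h x = false} := by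
    intro h hh
    cases hb : h x
    · exact Or.inr ⟨hh, hb⟩
    · exact Or.inl ⟨hh, hb⟩
  have hwit : ∀ b : Bool, ∃ h ∈ S, h x ≠ b := by
    intro b
    by_cases hfx : f x = b
    · exact ⟨g, hg, fun hgx => hx (hfx.trans hgx.symm)⟩
    · exact ⟨f, hf, hfx⟩
  rcases Set.infinite_union.mp (hS.mono hsplit) with h1 | h1
  · exact ⟨(x, true), h1, hwit true⟩
  · exact ⟨(x, false), h1, hwit false⟩

/-- A concept class `H` has an infinite eluder sequence iff `H` is infinite. -/
theorem infinite_eluder_seq_iff_infinite {X : Type*} (H : Set (X → Bool)) :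
    (∃ (x : ℕ → X) (y : ℕ → Bool),
      (∀ n : ℕ, ∃ h ∈ H, ∀ i < n, h (x i) = y i) ∧
      (∀ k : ℕ, ∃ h ∈ H, (∀ i < k, h (x i) = y i) ∧ h (x k) ≠ y k)) ↔
    H.Infinite := by
  constructor
  · rintro ⟨x, y, _, h2⟩
    choose f hfH hcons hbad using h2
    have hinj : Function.Injective f := by
      intro k j hkj
      by_contra hne
      rcases Nat.lt_or_ge k j with h | h
      · exact hbad k (by rw [hkj]; exact hcons j k h)
      · have h' : j < k := lt_of_le_of_ne h (Ne.symm hne)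
        exact hbad j (by rw [← hkj]; exact hcons k j h')
    exact Set.infinite_of_injective_forall_mem hinj hfH
  · intro hH
    have key : ∀ S : {S : Set (X → Bool) // S.Infinite}, ∃ p : X × Bool,
        {h ∈ S.1 | h p.1 = p.2}.Infinite ∧ ∃ h ∈ S.1, h p.1 ≠ p.2 :=
      fun S => eluder_step_lemma S.2
    choose p hp1 hp2 using key
    let F : ℕ → {S : Set (X → Bool) // S.Infinite} :=
      fun n => Nat.rec ⟨H, hH⟩ (fun _ S => ⟨{h ∈ S.1 | h (p S).1 = (p S).2}, hp1 S⟩) n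
    refine ⟨fun n => (p (F n)).1, fun n => (p (F n)).2, ?_, ?_⟩
    · -- monotonicity facts
      have hsub : ∀ n, (F (n + 1)).1 ⊆ (F n).1 := fun n h hh => hh.1
      have hmono : ∀ m n, m ≤ n → (F n).1 ⊆ (F m).1 := by
        intro m n hmn
        induction n with
        | zero => rw [Nat.le_zero.mp hmn]
        | succ n ih =>
          rcases Nat.lt_or_ge m (n + 1) with h | h
          · exact fun f hf => ih (Nat.lt_succ_iff.mp h) (hsub n hf)
          · rw [Nat.le_antisymm hmn h]
      intro n
      obtain ⟨h, hh⟩ := (F n).2.nonempty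
      refine ⟨h, hmono 0 n (Nat.zero_le n) hh, fun i hi => ?_⟩
      have : h ∈ (F (i + 1)).1 := hmono (i + 1) n hi hh
      exact this.2
    · intro k
      have hsub : ∀ n, (F (n + 1)).1 ⊆ (F n).1 := fun n h hh => hh.1
      have hmono : ∀ m n, m ≤ n → (F n).1 ⊆ (F m).1 := by
        intro m n hmn
        induction n with
        | zero => rw [Nat.le_zero.mp hmn]
        | succ n ih =>
          rcases Nat.lt_or_ge m (n + 1) with h | h
          · exact fun f hf => ih (Nat.lt_succ_iff.mp h) (hsub n hf)
          · rw [Nat.le_antisymm hmn h]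
      obtain ⟨h, hh, hbad⟩ := hp2 (F k)
      refine ⟨h, hmono 0 k (Nat.zero_le k) hh, fun i hi => ?_, hbad⟩
      have : h ∈ (F (i + 1)).1 := hmono (i + 1) k hi hh
      exact this.2
end

section
/- A concept class H has an infinite VC-eluder sequence if and only if H has infinite VC dimension. -/
/-!
If `C` has infinite VC dimension and `s` is a point, one of the halves `{h ∈ C | h s = v}` still
has infinite VC dimension. Otherwise the halves shatter no `a`-set and no `b`-set respectively,
whereas whenever `C₀ ∪ C₁` shatters a set of size `a + b`, either `C₀` shatters an `a`-subset or
`C₁` shatters a `b`-subset (by induction on the set: remove a point `s`, and keep in `C₀` only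
the members with a twin in `C₀` differing from them exactly at `s`). Applying this to the points
of a shattered `k`-set one at a time yields labels whose version space again has infinite VC
dimension, so the blocks of an eluder sequence can be chosen greedily. Conversely, block `d + 1`
of an eluder sequence contains a shattered `d`-set.
-/

def nIdx (k : ℕ) : ℕ := k * (k - 1) / 2

open scoped Finset

theorem nIdx_succ (k : ℕ) : nIdx (k + 1) = nIdx k + k := by
  rw [nIdx, nIdx, ← Nat.choose_two_right, ← Nat.choose_two_right, Nat.choose_succ_succ',
    Nat.choose_one_right, add_comm]

theorem nIdx_mono : Monotone nIdx :=
  monotone_nat_of_le_succ fun k ↦ (nIdx_succ k).symm ▸ Nat.le_add_right _ _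

theorem nIdx_add_lt {k l : ℕ} (i : Fin k) (hkl : k < l) : nIdx k + i < nIdx l :=
  calc nIdx k + i < nIdx (k + 1) := by rw [nIdx_succ]; omega
    _ ≤ nIdx l := nIdx_mono hkl

noncomputable def nIdxEquiv : (Σ k, Fin k) ≃ ℕ :=
  Equiv.ofBijective (fun p ↦ nIdx p.1 + p.2) ⟨by
    rintro ⟨k, i⟩ ⟨l, j⟩ (hij : nIdx k + i = nIdx l + j)
    obtain rfl : k = l := by
      rcases lt_trichotomy k l with hkl | rfl | hlk
      · have := nIdx_add_lt i hkl; omega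
      · rfl
      · have := nIdx_add_lt j hlk; omega
    obtain rfl : i = j := Fin.ext (by omega)
    rfl, by
    intro n
    induction n with
    | zero => exact ⟨⟨1, 0⟩, rfl⟩
    | succ n ih =>
      obtain ⟨⟨k, i⟩, rfl : nIdx k + i = n⟩ := ih
      by_cases hi : (i : ℕ) + 1 < k
      · exact ⟨⟨k, ⟨i + 1, hi⟩⟩, by simp only; omega⟩
      · exact ⟨⟨k + 1, 0⟩, by simp [nIdx_succ]; omega⟩⟩

namespace ConceptClass

variable {X : Type*}

def Shatters (C : Set (X → Bool)) (S : Finset X) : Prop :=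
  ∀ f : X → Bool, ∃ h ∈ C, ∀ x ∈ S, h x = f x

def HasInfiniteVCDim (C : Set (X → Bool)) : Prop :=
  ∀ d : ℕ, ∃ S : Finset X, #S = d ∧ Shatters C S

variable {C D : Set (X → Bool)} {S T : Finset X}

theorem Shatters.mono_left (hCD : C ⊆ D) (hC : Shatters C S) : Shatters D S := fun f ↦
  let ⟨h, hC, hf⟩ := hC f; ⟨h, hCD hC, hf⟩

theorem HasInfiniteVCDim.mono (hCD : C ⊆ D) (hC : HasInfiniteVCDim C) : HasInfiniteVCDim D :=
  fun d ↦ let ⟨S, hS, hCS⟩ := hC d; ⟨S, hS, hCS.mono_left hCD⟩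

theorem shatters_empty_iff : Shatters C ∅ ↔ C.Nonempty := by
  simp [Shatters, Set.Nonempty]

def twins (C : Set (X → Bool)) (S : Finset X) (s : X) : Set (X → Bool) :=
  {h ∈ C | ∃ h' ∈ C, (∀ x ∈ S, h' x = h x) ∧ h' s ≠ h s}

theorem Shatters.twins_union [DecidableEq X] {C₀ C₁ : Set (X → Bool)} {s : X} (hs : s ∉ S)
    (h : Shatters (C₀ ∪ C₁) (insert s S)) : Shatters (twins C₀ S s ∪ C₁) S := by
  intro f
  have agree : ∀ v, ∀ x ∈ S, Function.update f s v x = f x := fun v x hx ↦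
    Function.update_of_ne (ne_of_mem_of_not_mem hx hs) _ _
  obtain ⟨h₀, hC₀, hf₀⟩ := h (Function.update f s false)
  obtain ⟨h₁, hC₁, hf₁⟩ := h (Function.update f s true)
  have hs₀ : h₀ s = false := by simpa using hf₀ s (Finset.mem_insert_self s S)
  have hs₁ : h₁ s = true := by simpa using hf₁ s (Finset.mem_insert_self s S)
  have hS₀ : ∀ x ∈ S, h₀ x = f x := fun x hx ↦
    (hf₀ x (Finset.mem_insert_of_mem hx)).trans (agree _ x hx)
  have hS₁ : ∀ x ∈ S, h₁ x = f x := fun x hx ↦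
    (hf₁ x (Finset.mem_insert_of_mem hx)).trans (agree _ x hx)
  rcases hC₀ with hC₀ | hC₀
  · rcases hC₁ with hC₁ | hC₁
    · refine ⟨h₀, Or.inl ⟨hC₀, h₁, hC₁, fun x hx ↦ (hS₁ x hx).trans (hS₀ x hx).symm, ?_⟩, hS₀⟩
      simp [hs₀, hs₁]
    · exact ⟨h₁, Or.inr hC₁, hS₁⟩
  · exact ⟨h₀, Or.inr hC₀, hS₀⟩

theorem Shatters.insert_of_twins [DecidableEq X] {s : X} (hTS : T ⊆ S)
    (h : Shatters (twins C S s) T) : Shatters C (insert s T) := by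
  intro f
  obtain ⟨h, ⟨hC, h', hC', hSh', hsh'⟩, hTf⟩ := h f
  have hTf' : ∀ x ∈ T, h' x = f x := fun x hx ↦ (hSh' x (hTS hx)).trans (hTf x hx)
  by_cases hs : h s = f s
  · exact ⟨h, hC, (Finset.forall_mem_insert _ _ _).2 ⟨hs, hTf⟩⟩
  · refine ⟨h', hC', (Finset.forall_mem_insert _ _ _).2 ⟨?_, hTf'⟩⟩
    revert hsh' hs; cases h s <;> cases h' s <;> cases f s <;> simp

theorem Shatters.exists_of_union {C₀ C₁ : Set (X → Bool)} (h : Shatters (C₀ ∪ C₁) S)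
    {a b : ℕ} (hab : #S = a + b) :
    (∃ A ⊆ S, #A = a ∧ Shatters C₀ A) ∨ (∃ B ⊆ S, #B = b ∧ Shatters C₁ B) := by
  classical
  induction S using Finset.induction_on generalizing C₀ a with
  | empty =>
    obtain ⟨rfl, rfl⟩ : a = 0 ∧ b = 0 := by simpa [eq_comm] using hab
    rcases (shatters_empty_iff.1 h) with ⟨g, hg | hg⟩
    · exact .inl ⟨∅, subset_rfl, rfl, shatters_empty_iff.2 ⟨g, hg⟩⟩
    · exact .inr ⟨∅, subset_rfl, rfl, shatters_empty_iff.2 ⟨g, hg⟩⟩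
  | insert s S hs ih =>
    cases a with
    | zero =>
      rcases C₀.eq_empty_or_nonempty with rfl | hne
      · exact .inr ⟨_, subset_rfl, by simpa using hab, by simpa using h⟩
      · exact .inl ⟨∅, Finset.empty_subset _, rfl, shatters_empty_iff.2 hne⟩
    | succ a =>
      rw [Finset.card_insert_of_notMem hs] at hab
      rcases ih (a := a) (h.twins_union hs) (by omega) with
        ⟨A, hAS, hA, hCA⟩ | ⟨B, hBS, hB, hCB⟩
      · refine .inl ⟨insert s A, Finset.insert_subset_insert s hAS, ?_, hCA.insert_of_twins hAS⟩
        rw [Finset.card_insert_of_notMem (fun hsA ↦ hs (hAS hsA)), hA]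
      · exact .inr ⟨B, hBS.trans (Finset.subset_insert s S), hB, hCB⟩

def versionSpace (C : Set (X → Bool)) (S : Finset X) (f : X → Bool) : Set (X → Bool) :=
  {h ∈ C | ∀ x ∈ S, h x = f x}

theorem HasInfiniteVCDim.exists_fiber (hC : HasInfiniteVCDim C) (s : X) :
    ∃ v : Bool, HasInfiniteVCDim {h ∈ C | h s = v} := by
  by_contra! hfin
  have hbound (v : Bool) : ∃ d, ∀ S : Finset X, #S = d → ¬ Shatters {h ∈ C | h s = v} S := by
    simpa [HasInfiniteVCDim] using hfin v
  obtain ⟨a, ha⟩ := hbound false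
  obtain ⟨b, hb⟩ := hbound true
  obtain ⟨S, hS, hCS⟩ := hC (a + b)
  have hsplit : C ⊆ {h ∈ C | h s = false} ∪ {h ∈ C | h s = true} := fun h hh ↦ by
    cases hv : h s
    exacts [.inl ⟨hh, hv⟩, .inr ⟨hh, hv⟩]
  rcases (hCS.mono_left hsplit).exists_of_union hS with ⟨A, -, hA, hCA⟩ | ⟨B, -, hB, hCB⟩
  exacts [ha A hA hCA, hb B hB hCB]

theorem HasInfiniteVCDim.exists_versionSpace (hC : HasInfiniteVCDim C) (S : Finset X) :
    ∃ f : X → Bool, HasInfiniteVCDim (versionSpace C S f) := by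
  classical
  induction S using Finset.induction_on with
  | empty => exact ⟨fun _ ↦ false, hC.mono fun h hh ↦ ⟨hh, by simp⟩⟩
  | insert s S _ ih =>
    obtain ⟨f, hf⟩ := ih
    obtain ⟨v, hv⟩ := hf.exists_fiber s
    refine ⟨Function.update f s v, hv.mono ?_⟩
    rintro h ⟨⟨hC, hSf⟩, hsv⟩
    refine ⟨hC, (Finset.forall_mem_insert _ _ _).2 ⟨by simpa using hsv, fun x hx ↦ ?_⟩⟩
    rw [Function.update_apply]
    split_ifs with hxs
    exacts [hxs ▸ hsv, hSf x hx]

theorem Shatters.exists_of_equiv {k : ℕ} (hCS : Shatters C S) (e : S ≃ Fin k) (b : Fin k → Bool) :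
    ∃ h ∈ C, ∀ i, h (e.symm i) = b i := by
  classical
  obtain ⟨h, hC, hb⟩ := hCS fun x ↦ if hx : x ∈ S then b (e ⟨x, hx⟩) else false
  exact ⟨h, hC, fun i ↦ by simpa using hb _ (e.symm i).2⟩

theorem hasInfiniteVCDim_iff_forall_tuple : HasInfiniteVCDim C ↔
    ∀ d : ℕ, ∃ pts : Fin d → X, ∀ b : Fin d → Bool, ∃ h ∈ C, ∀ i, h (pts i) = b i := by
  classical
  refine forall_congr' fun d ↦ ⟨fun ⟨S, hS, hCS⟩ ↦ ?_, fun ⟨pts, hpts⟩ ↦ ?_⟩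
  · let e := Finset.equivFinOfCardEq hS
    exact ⟨fun i ↦ e.symm i, hCS.exists_of_equiv e⟩
  · have hinj : pts.Injective := fun i j hij ↦ by
      obtain ⟨h, -, hh⟩ := hpts fun l ↦ decide (l = i)
      simpa [hij, hh, eq_comm] using hh i
    refine ⟨Finset.univ.image pts, by simp [Finset.card_image_of_injective _ hinj], fun f ↦ ?_⟩
    obtain ⟨h, hC, hh⟩ := hpts (f ∘ pts)
    exact ⟨h, hC, by simpa using hh⟩

theorem HasInfiniteVCDim.exists_block (hC : HasInfiniteVCDim C) (k : ℕ) :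
    ∃ blk : (Fin k → X) × (Fin k → Bool), (∀ b : Fin k → Bool, ∃ h ∈ C, ∀ i, h (blk.1 i) = b i) ∧
      HasInfiniteVCDim {h ∈ C | ∀ i, h (blk.1 i) = blk.2 i} := by
  obtain ⟨S, hS, hCS⟩ := hC k
  obtain ⟨f, hf⟩ := hC.exists_versionSpace S
  let e := Finset.equivFinOfCardEq hS
  exact ⟨(fun i ↦ e.symm i, fun i ↦ f (e.symm i)), hCS.exists_of_equiv e,
    hf.mono fun _ hh ↦ ⟨hh.1, fun i ↦ hh.2 _ (e.symm i).2⟩⟩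

theorem HasInfiniteVCDim.nonempty (hC : HasInfiniteVCDim C) : C.Nonempty := by
  obtain ⟨S, hS, hCS⟩ := hC 0
  rw [Finset.card_eq_zero] at hS
  exact shatters_empty_iff.1 (hS ▸ hCS)

noncomputable def HasInfiniteVCDim.block (hC : HasInfiniteVCDim C) (k : ℕ) :
    (Fin k → X) × (Fin k → Bool) :=
  (hC.exists_block k).choose

section EluderSequence

variable {H : Set (X → Bool)} (hH : HasInfiniteVCDim H)

noncomputable def eluderStage : ℕ → {V : Set (X → Bool) // HasInfiniteVCDim V}
  | 0 => ⟨H, hH⟩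
  | k + 1 =>
    let V := eluderStage k
    ⟨{h ∈ V.1 | ∀ i, h ((V.2.block k).1 i) = (V.2.block k).2 i},
      (V.2.exists_block k).choose_spec.2⟩

noncomputable def eluderEntry (p : Σ k, Fin k) : X × Bool :=
  let B := (eluderStage hH p.1).2.block p.1
  (B.1 p.2, B.2 p.2)

noncomputable def eluderSeq (n : ℕ) : X × Bool :=
  eluderEntry hH (nIdxEquiv.symm n)

theorem eluderSeq_nIdx_add (k : ℕ) (i : Fin k) :
    eluderSeq hH (nIdx k + i) = eluderEntry hH ⟨k, i⟩ :=
  congrArg (eluderEntry hH) (nIdxEquiv.symm_apply_apply ⟨k, i⟩)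

theorem eluderStage_subset (k : ℕ) :
    (eluderStage hH k).1 ⊆ {h ∈ H | ∀ n < nIdx k, h (eluderSeq hH n).1 = (eluderSeq hH n).2} := by
  induction k with
  | zero => exact fun h hHh ↦ ⟨hHh, fun n hn ↦ absurd hn (Nat.not_lt_zero n)⟩
  | succ k ih =>
    rintro h ⟨hV, hblock⟩
    obtain ⟨hHh, hprefix⟩ := ih hV
    refine ⟨hHh, fun n hn ↦ ?_⟩
    rw [nIdx_succ] at hn
    by_cases hnk : n < nIdx k
    · exact hprefix n hnk
    · obtain ⟨i, rfl⟩ : ∃ i : Fin k, nIdx k + i = n :=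
        ⟨⟨n - nIdx k, by omega⟩, by simp only; omega⟩
      rw [eluderSeq_nIdx_add]
      exact hblock _

end EluderSequence

theorem HasInfiniteVCDim.exists_eluderSeq {H : Set (X → Bool)} (hH : HasInfiniteVCDim H) :
    ∃ (x : ℕ → X) (y : ℕ → Bool),
      (∀ n : ℕ, ∃ h ∈ H, ∀ i < n, h (x i) = y i) ∧
      (∀ k : ℕ, ∀ b : Fin k → Bool,
        ∃ h ∈ H, (∀ i < nIdx k, h (x i) = y i) ∧ ∀ i : Fin k, h (x (nIdx k + i)) = b i) := by
  refine ⟨fun n ↦ (eluderSeq hH n).1, fun n ↦ (eluderSeq hH n).2, fun n ↦ ?_, fun k b ↦ ?_⟩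
  · obtain ⟨⟨k, i⟩, hn : nIdx k + i = n⟩ := nIdxEquiv.surjective n
    obtain ⟨h, hV⟩ := (eluderStage hH (k + 1)).2.nonempty
    obtain ⟨hHh, hprefix⟩ := eluderStage_subset hH (k + 1) hV
    exact ⟨h, hHh, fun i hi ↦ hprefix i (by rw [nIdx_succ]; omega)⟩
  · obtain ⟨h, hV, hb⟩ := ((eluderStage hH k).2.exists_block k).choose_spec.1 b
    obtain ⟨hHh, hprefix⟩ := eluderStage_subset hH k hV
    exact ⟨h, hHh, hprefix, fun i ↦ by simp only [eluderSeq_nIdx_add]; exact hb i⟩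

end ConceptClass

/-- A concept class has an infinite VC-eluder sequence iff it has infinite
VC dimension.  An infinite VC-eluder sequence is a realizable sequence `(x_i, y_i)` such
that for every `k ≥ 1` the `k` points `x_{n_k+1}, …, x_{n_k+k}` are shattered by the
version space induced by the first `n_k` labeled pairs. -/
theorem infinite_vc_eluder_iff_infinite_vc {X : Type*} (H : Set (X → Bool)) :
    (∃ (x : ℕ → X) (y : ℕ → Bool),
      (∀ n : ℕ, ∃ h ∈ H, ∀ i < n, h (x i) = y i) ∧
      (∀ k : ℕ, 1 ≤ k → ∀ b : Fin k → Bool,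
        ∃ h ∈ H, (∀ i < nIdx k, h (x i) = y i) ∧
          ∀ i : Fin k, h (x (nIdx k + i)) = b i)) ↔
    (∀ d : ℕ, ∃ pts : Fin d → X, ∀ b : Fin d → Bool, ∃ h ∈ H, ∀ i, h (pts i) = b i) := by
  refine ⟨fun ⟨x, _, _, heluder⟩ d ↦ ?_, fun hH ↦ ?_⟩
  · refine ⟨fun i ↦ x (nIdx (d + 1) + i.castSucc), fun b ↦ ?_⟩
    obtain ⟨h, hH, -, hb⟩ := heluder (d + 1) d.succ_pos (Fin.snoc b false)
    exact ⟨h, hH, fun i ↦ by simpa using hb i.castSucc⟩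
  · obtain ⟨x, y, hrealizable, heluder⟩ :=
      (ConceptClass.hasInfiniteVCDim_iff_forall_tuple.2 hH).exists_eluderSeq
    exact ⟨x, y, hrealizable, fun k _ ↦ heluder k⟩
end

section
/- If N concept classes H_1,...,H_N each have VC dimension at most T, then the VC dimension of their union is at most 2·log₂(N) + 4T. -/
/-- Counting step: if every pattern on `s` is realized by the union of the `H i`,
then `2 ^ s.card ≤ N * ∑_{k ≤ T} C(s.card, k)`. -/
theorem vc_count_aux {X : Type*} (N T : ℕ) (H : Fin N → Set (X → Bool))
    (hT : ∀ i : Fin N, ∀ s : Finset X,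
      (∀ b : X → Bool, ∃ h ∈ H i, ∀ x ∈ s, h x = b x) → s.card ≤ T)
    (s : Finset X)
    (hs : ∀ b : X → Bool, ∃ h ∈ ⋃ i, H i, ∀ x ∈ s, h x = b x) :
    2 ^ s.card ≤ N * ∑ k ∈ Finset.range (T + 1), s.card.choose k := by
  classical
  set F : Fin N → Finset (Finset X) := fun i =>
    s.powerset.filter (fun t => ∃ h ∈ H i, ∀ x ∈ s, (h x = true ↔ x ∈ t)) with hF
  have hsub : s.powerset ⊆ Finset.univ.biUnion F := by
    intro t ht
    obtain ⟨h, hh, hb⟩ := hs (fun x => decide (x ∈ t))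
    simp only [Set.mem_iUnion] at hh
    obtain ⟨i, hi⟩ := hh
    refine Finset.mem_biUnion.2 ⟨i, Finset.mem_univ i,
      Finset.mem_filter.2 ⟨ht, h, hi, ?_⟩⟩
    intro x hx
    rw [hb x hx]
    simp
  have hcard : ∀ i, (F i).card ≤ ∑ k ∈ Finset.range (T + 1), s.card.choose k := by
    intro i
    refine (Finset.card_le_card_shatterer (F i)).trans ?_
    have hsub2 : (F i).shatterer ⊆
        (Finset.range (T + 1)).biUnion (fun k => s.powersetCard k) := by
      intro t ht
      rw [Finset.mem_shatterer] at ht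
      obtain ⟨u, hu, htu⟩ := ht.exists_superset
      have hus : u ⊆ s := Finset.mem_powerset.1 (Finset.mem_filter.1 hu).1
      have hts : t ⊆ s := htu.trans hus
      have htT : t.card ≤ T := by
        apply hT i t
        intro b
        obtain ⟨w, hw, hwt⟩ := ht (Finset.filter_subset (fun x => b x = true) t)
        obtain ⟨hwpow, h, hh, hhw⟩ := Finset.mem_filter.1 hw
        refine ⟨h, hh, ?_⟩
        intro x hx
        have hxs : x ∈ s := hts hx
        have hiff : h x = true ↔ b x = true := by
          rw [hhw x hxs]
          constructor
          · intro hxw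
            have hmem : x ∈ t ∩ w := Finset.mem_inter.2 ⟨hx, hxw⟩
            rw [hwt] at hmem
            exact (Finset.mem_filter.1 hmem).2
          · intro hbx
            have hmem : x ∈ t ∩ w := by
              rw [hwt]; exact Finset.mem_filter.2 ⟨hx, hbx⟩
            exact (Finset.mem_inter.1 hmem).2
        exact Bool.eq_iff_iff.2 hiff
      exact Finset.mem_biUnion.2 ⟨t.card, Finset.mem_range.2 (by omega),
        Finset.mem_powersetCard.2 ⟨hts, rfl⟩⟩
    refine (Finset.card_le_card hsub2).trans ?_
    refine (Finset.card_biUnion_le).trans ?_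
    refine le_of_eq (Finset.sum_congr rfl ?_)
    intro k _
    exact Finset.card_powersetCard k s
  calc 2 ^ s.card = s.powerset.card := (Finset.card_powerset s).symm
    _ ≤ (Finset.univ.biUnion F).card := Finset.card_le_card hsub
    _ ≤ ∑ i, (F i).card := Finset.card_biUnion_le
    _ ≤ ∑ _i : Fin N, ∑ k ∈ Finset.range (T + 1), s.card.choose k :=
        Finset.sum_le_sum (fun i _ => hcard i)
    _ = N * ∑ k ∈ Finset.range (T + 1), s.card.choose k := by
        rw [Finset.sum_const, Finset.card_univ, Fintype.card_fin, smul_eq_mul]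

/-- Real form of Sauer's bound: `∑_{k ≤ T} C(m, k) ≤ (e m / T) ^ T` for `1 ≤ T ≤ m`. -/
theorem sauer_real (m T : ℕ) (hT : 1 ≤ T) (hTm : T ≤ m) :
    (∑ k ∈ Finset.range (T + 1), (m.choose k : ℝ)) ≤ (Real.exp 1 * m / T) ^ T := by
  have hm0 : 0 < (m : ℝ) := by
    have : 1 ≤ m := hT.trans hTm
    exact_mod_cast Nat.lt_of_lt_of_le Nat.zero_lt_one this
  have hT0 : 0 < (T : ℝ) := by exact_mod_cast hT
  set p : ℝ := (T : ℝ) / m with hp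
  have hp0 : 0 < p := by positivity
  have hp1 : p ≤ 1 := by
    rw [hp, div_le_one hm0]
    exact_mod_cast hTm
  have hpm : p * m = T := by rw [hp]; field_simp
  have key : p ^ T * ∑ k ∈ Finset.range (T + 1), (m.choose k : ℝ) ≤ Real.exp T := by
    have h1 : p ^ T * ∑ k ∈ Finset.range (T + 1), (m.choose k : ℝ)
        ≤ ∑ k ∈ Finset.range (T + 1), p ^ k * 1 ^ (m - k) * (m.choose k : ℝ) := by
      rw [Finset.mul_sum]
      refine Finset.sum_le_sum ?_
      intro k hk
      have hkT : k ≤ T := by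
        have := Finset.mem_range.1 hk; omega
      have : p ^ T ≤ p ^ k := pow_le_pow_of_le_one hp0.le hp1 hkT
      have hc : (0 : ℝ) ≤ (m.choose k : ℝ) := by positivity
      calc p ^ T * (m.choose k : ℝ) ≤ p ^ k * (m.choose k : ℝ) :=
            mul_le_mul_of_nonneg_right this hc
        _ = p ^ k * 1 ^ (m - k) * (m.choose k : ℝ) := by rw [one_pow, mul_one]
    have h2 : ∑ k ∈ Finset.range (T + 1), p ^ k * 1 ^ (m - k) * (m.choose k : ℝ)
        ≤ ∑ k ∈ Finset.range (m + 1), p ^ k * 1 ^ (m - k) * (m.choose k : ℝ) := by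
      refine Finset.sum_le_sum_of_subset_of_nonneg ?_ ?_
      · exact Finset.range_subset_range.2 (by omega)
      · intro k _ _; positivity
    have h3 : ∑ k ∈ Finset.range (m + 1), p ^ k * 1 ^ (m - k) * (m.choose k : ℝ)
        = (p + 1) ^ m := (add_pow p 1 m).symm
    have h4 : (p + 1) ^ m ≤ Real.exp T := by
      have hle : p + 1 ≤ Real.exp p := Real.add_one_le_exp p
      have := pow_le_pow_left₀ (by positivity) hle m
      rw [← Real.exp_nat_mul] at this
      calc (p + 1) ^ m ≤ Real.exp (p * m) := by
            rw [mul_comm]; exact this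
        _ = Real.exp T := by rw [hpm]
    linarith
  have hppow : 0 < p ^ T := pow_pos hp0 T
  have hfin : (∑ k ∈ Finset.range (T + 1), (m.choose k : ℝ)) ≤ Real.exp T / p ^ T := by
    rw [le_div_iff₀ hppow, mul_comm]
    exact key
  refine hfin.trans (le_of_eq ?_)
  rw [← Real.exp_one_pow, ← div_pow]
  congr 1
  rw [hp]
  field_simp

/-- Analytic step: `2^m ≤ N · ∑_{k ≤ T} C(m,k)` implies `m ≤ 2 log₂ N + 4T`. -/
theorem vc_analytic (N T m : ℕ) (hN : 1 ≤ N)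
    (h : (2 : ℝ) ^ m ≤ N * ∑ k ∈ Finset.range (T + 1), (m.choose k : ℝ)) :
    (m : ℝ) ≤ 2 * Real.logb 2 N + 4 * T := by
  have hN1 : (1 : ℝ) ≤ N := by exact_mod_cast hN
  have hN0 : (0 : ℝ) < N := by linarith
  have hlogbN : 0 ≤ Real.logb 2 N := Real.logb_nonneg one_lt_two hN1
  have hlogN : 0 ≤ Real.log N := Real.log_nonneg hN1
  have hL : (0.6931471803 : ℝ) < Real.log 2 := Real.log_two_gt_d9
  have hL0 : 0 < Real.log 2 := by linarith
  have hlogb_eq : Real.logb 2 N = Real.log N / Real.log 2 := (Real.log_div_log).symm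
  rcases Nat.eq_zero_or_pos T with hT0 | hT1
  · -- T = 0 : sum is 1, so 2^m ≤ N
    subst hT0
    simp only [zero_add, Finset.range_one, Finset.sum_singleton, Nat.choose_zero_right,
      Nat.cast_one, mul_one] at h
    have hlog : (m : ℝ) * Real.log 2 ≤ Real.log N := by
      have := Real.log_le_log (by positivity) h
      rwa [Real.log_pow] at this
    have hmle : (m : ℝ) ≤ Real.log N / Real.log 2 := by
      rw [le_div_iff₀ hL0]; exact hlog
    rw [hlogb_eq]
    push_cast
    linarith
  · by_cases hcase : m ≤ 4 * T
    · have : (m : ℝ) ≤ 4 * T := by exact_mod_cast hcase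
      linarith
    · push_neg at hcase
      have hTm : T ≤ m := by omega
      have hT0R : 0 < (T : ℝ) := by exact_mod_cast hT1
      have hm0 : 0 < (m : ℝ) := by
        have : 0 < m := by omega
        exact_mod_cast this
      set R : ℝ := (m : ℝ) / T with hR
      have hR0 : 0 < R := by positivity
      have hTR : (T : ℝ) * R = m := by rw [hR]; field_simp
      -- main log inequality
      have h2 : (2 : ℝ) ^ m ≤ N * (Real.exp 1 * m / T) ^ T :=
        h.trans (mul_le_mul_of_nonneg_left (sauer_real m T hT1 hTm) hN0.le)
      have hbase : 0 < Real.exp 1 * m / T := by positivity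
      have hmain : (m : ℝ) * Real.log 2 ≤ Real.log N + T * (1 + Real.log R) := by
        have hlog := Real.log_le_log (by positivity) h2
        rw [Real.log_pow, Real.log_mul (ne_of_gt hN0) (ne_of_gt (pow_pos hbase T)),
          Real.log_pow] at hlog
        have hbeq : Real.log (Real.exp 1 * m / T) = 1 + Real.log R := by
          rw [mul_div_assoc, Real.log_mul (Real.exp_pos 1).ne' (ne_of_gt hR0),
            Real.log_exp]
        rw [hbeq] at hlog
        exact_mod_cast hlog
      -- tangent line bound for log
      have htan : Real.log R ≤ R * (Real.log 2 / 2) - 1 - Real.log (Real.log 2 / 2) := by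
        have hx : 0 < R * (Real.log 2 / 2) := by positivity
        have := Real.log_le_sub_one_of_pos hx
        rw [Real.log_mul (ne_of_gt hR0) (by positivity)] at this
        linarith
      -- log (log 2 / 2) ≥ -2 log 2
      have hloghalf : -(2 * Real.log 2) ≤ Real.log (Real.log 2 / 2) := by
        have h14 : Real.log ((1 : ℝ) / 4) ≤ Real.log (Real.log 2 / 2) :=
          Real.log_le_log (by norm_num) (by linarith)
        have heq : Real.log ((1 : ℝ) / 4) = -(2 * Real.log 2) := by
          rw [one_div, Real.log_inv, show (4 : ℝ) = 2 ^ (2 : ℕ) by norm_num,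
            Real.log_pow]
          push_cast; ring
        linarith [heq ▸ h14]
      -- multiply by T ≥ 0 and assemble
      have hA : (T : ℝ) * Real.log R
          ≤ T * (R * (Real.log 2 / 2) - 1 - Real.log (Real.log 2 / 2)) :=
        mul_le_mul_of_nonneg_left htan hT0R.le
      have hB : (T : ℝ) * (-(2 * Real.log 2)) ≤ T * Real.log (Real.log 2 / 2) :=
        mul_le_mul_of_nonneg_left hloghalf hT0R.le
      have hC : (T : ℝ) * (R * (Real.log 2 / 2)) = m * (Real.log 2 / 2) := by
        rw [← hTR]; ring
      have hfin : (m : ℝ) * Real.log 2 ≤ 2 * Real.log N + 4 * T * Real.log 2 := by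
        nlinarith [hmain, hA, hB, hC]
      rw [hlogb_eq]
      calc (m : ℝ) = m * Real.log 2 / Real.log 2 := by field_simp
        _ ≤ (2 * Real.log N + 4 * T * Real.log 2) / Real.log 2 := by gcongr
        _ = 2 * (Real.log N / Real.log 2) + 4 * T := by field_simp; try ring

/-- If `N` concept classes each have VC dimension at most `T`, then the VC
dimension of their union is at most `2·log₂ N + 4T`: every set shattered by the union has
cardinality at most this bound. -/
theorem vc_dim_union_le {X : Type*} (N T : ℕ) (hN : 1 ≤ N)
    (H : Fin N → Set (X → Bool))
    (hT : ∀ i : Fin N, ∀ s : Finset X,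
      (∀ b : X → Bool, ∃ h ∈ H i, ∀ x ∈ s, h x = b x) → s.card ≤ T) :
    ∀ s : Finset X,
      (∀ b : X → Bool, ∃ h ∈ ⋃ i, H i, ∀ x ∈ s, h x = b x) →
      (s.card : ℝ) ≤ 2 * Real.logb 2 N + 4 * T := by
  intro s hs
  have hcount := vc_count_aux N T H hT s hs
  apply vc_analytic N T s.card hN
  have : ((2 ^ s.card : ℕ) : ℝ) ≤ ((N * ∑ k ∈ Finset.range (T + 1), s.card.choose k : ℕ) : ℝ) := by
    exact_mod_cast hcount
  push_cast at this
  exact_mod_cast this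
end

section
/- Every infinite concept class has either an infinite star set or an infinite threshold sequence. -/
private lemma split_infinite {α : Type*} {S : Set α} (hS : S.Infinite) (p : α → Bool) :
    ∃ b, {a ∈ S | p a = b}.Infinite := by
  by_contra h
  push_neg at h
  apply hS
  refine ((h true).union (h false)).subset ?_
  intro a ha
  cases hb : p a
  · exact Or.inr ⟨ha, hb⟩
  · exact Or.inl ⟨ha, hb⟩

private lemma ramsey_pairs (c : ℕ → ℕ → Bool) :
    ∃ (φ : ℕ → ℕ) (b : Bool), StrictMono φ ∧ ∀ i j, i < j → c (φ i) (φ j) = b := by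
  have key : ∀ S : Set ℕ, S.Infinite → ∃ (a : ℕ) (b : Bool) (S' : Set ℕ),
      a ∈ S ∧ S'.Infinite ∧ S' ⊆ S ∧ (∀ x ∈ S', a < x ∧ c a x = b) := by
    intro S hS
    obtain ⟨a, ha⟩ := hS.nonempty
    have h1 : {x ∈ S | a < x}.Infinite := by
      refine (hS.diff (Set.finite_Iic a)).mono ?_
      intro x hx
      exact ⟨hx.1, by simpa using hx.2⟩
    obtain ⟨b, hb⟩ := split_infinite h1 (c a)
    exact ⟨a, b, _, ha, hb, fun x hx => hx.1.1, fun x hx => ⟨hx.1.2, hx.2⟩⟩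
  choose A B S' hmem hinf hsub hprop using fun S : {S : Set ℕ // S.Infinite} => key S.1 S.2
  let chain : ℕ → {S : Set ℕ // S.Infinite} :=
    fun n => Nat.rec ⟨Set.univ, Set.infinite_univ⟩ (fun _ T => ⟨S' T, hinf T⟩) n
  set a : ℕ → ℕ := fun n => A (chain n) with ha_def
  set bb : ℕ → Bool := fun n => B (chain n) with hbb_def
  have hchain_succ : ∀ n, (chain (n+1)).1 = S' (chain n) := fun n => rfl
  have hchain_mono : ∀ i j, i ≤ j → (chain j).1 ⊆ (chain i).1 := by
    intro i j hij
    induction j with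
    | zero => simp_all
    | succ j ih =>
      rcases Nat.lt_or_ge i (j+1) with h | h
      · exact ((hchain_succ j ▸ hsub (chain j)).trans (ih (by omega)))
      · have : i = j + 1 := by omega
        subst this; exact fun x hx => hx
  have hamem : ∀ n, a n ∈ (chain n).1 := fun n => hmem (chain n)
  have hAstep : ∀ n x, x ∈ (chain (n+1)).1 → a n < x ∧ c (a n) x = bb n := by
    intro n x hx
    exact hprop (chain n) x (by rwa [hchain_succ] at hx)
  have haSM : StrictMono a := by
    apply strictMono_nat_of_lt_succ
    intro n
    exact (hAstep n (a (n+1)) (hamem (n+1))).1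
  have hcol : ∀ i j, i < j → c (a i) (a j) = bb i := by
    intro i j hij
    exact (hAstep i (a j) (hchain_mono (i+1) j hij (hamem j))).2
  obtain ⟨b0, hb0⟩ := split_infinite (Set.infinite_univ (α := ℕ)) bb
  have hb0' : {n : ℕ | bb n = b0}.Infinite := by
    refine hb0.mono ?_; intro n hn; exact hn.2
  refine ⟨a ∘ Nat.nth (fun n => bb n = b0), b0,
    haSM.comp (Nat.nth_strictMono hb0'), ?_⟩
  intro i j hij
  have h1 : Nat.nth (fun n => bb n = b0) i < Nat.nth (fun n => bb n = b0) j :=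
    Nat.nth_strictMono hb0' hij
  have h2 := Nat.nth_mem_of_infinite hb0' i
  simpa [h2] using hcol _ _ h1

private lemma eluder_exists {X : Type*} (H : Set (X → Bool)) (hH : H.Infinite) :
    ∃ (x : ℕ → X) (y : ℕ → Bool) (hc : ℕ → X → Bool),
      Function.Injective x ∧
      ∀ n, hc n ∈ H ∧ hc n (x n) ≠ y n ∧ ∀ i < n, hc n (x i) = y i := by
  have key : ∀ G : Set (X → Bool), G.Infinite → ∃ (x : X) (y : Bool) (h : X → Bool)
      (G' : Set (X → Bool)), h ∈ G ∧ h x ≠ y ∧ G'.Infinite ∧ G' ⊆ G ∧ ∀ g ∈ G', g x = y := by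
    intro G hG
    obtain ⟨h0, hh0⟩ := hG.nonempty
    obtain ⟨h1, hh1⟩ := (hG.diff (Set.finite_singleton h0)).nonempty
    have hne : h0 ≠ h1 := fun e => hh1.2 (by simp [e])
    obtain ⟨z, hz⟩ := Function.ne_iff.mp hne
    obtain ⟨b, hb⟩ := split_infinite hG (fun g => g z)
    have hwit : ∃ h ∈ G, h z ≠ b := by
      by_cases h0b : h0 z = b
      · exact ⟨h1, hh1.1, fun e => hz (h0b.trans e.symm)⟩
      · exact ⟨h0, hh0, h0b⟩
    obtain ⟨h, hhG, hhb⟩ := hwit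
    exact ⟨z, b, h, _, hhG, hhb, hb, fun g hg => hg.1, fun g hg => hg.2⟩
  choose xF yF hF S' hmem hdis hinf hsub hagree using
    fun G : {G : Set (X → Bool) // G.Infinite} => key G.1 G.2
  let chain : ℕ → {G : Set (X → Bool) // G.Infinite} :=
    fun n => Nat.rec ⟨H, hH⟩ (fun _ T => ⟨S' T, hinf T⟩) n
  set x : ℕ → X := fun n => xF (chain n) with hx_def
  set y : ℕ → Bool := fun n => yF (chain n) with hy_def
  set hc : ℕ → X → Bool := fun n => hF (chain n) with hc_def
  have hchain_succ : ∀ n, (chain (n+1)).1 = S' (chain n) := fun n => rfl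
  have hchain_sub : ∀ n, (chain n).1 ⊆ H := by
    intro n
    induction n with
    | zero => exact fun g hg => hg
    | succ n ih => exact (hchain_succ n ▸ hsub (chain n)).trans ih
  have hchain_mono : ∀ i j, i ≤ j → (chain j).1 ⊆ (chain i).1 := by
    intro i j hij
    induction j with
    | zero => simp_all
    | succ j ih =>
      rcases Nat.lt_or_ge i (j+1) with h | h
      · exact (hchain_succ j ▸ hsub (chain j)).trans (ih (by omega))
      · have : i = j + 1 := by omega
        subst this; exact fun g hg => hg
  have hstep : ∀ n g, g ∈ (chain (n+1)).1 → g (x n) = y n := by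
    intro n g hg
    exact hagree (chain n) g (by rwa [hchain_succ] at hg)
  have hmem' : ∀ n, hc n ∈ (chain n).1 := fun n => hmem (chain n)
  have hpre : ∀ n, ∀ i < n, hc n (x i) = y i := by
    intro n i hi
    exact hstep i (hc n) (hchain_mono (i+1) n hi (hmem' n))
  have hdis' : ∀ n, hc n (x n) ≠ y n := fun n => hdis (chain n)
  refine ⟨x, y, hc, ?_, fun n => ⟨hchain_sub n (hmem' n), hdis' n, hpre n⟩⟩
  intro i j hij
  by_contra hne
  rcases Nat.lt_or_ge i j with h | h
  · have e1 : y i = y j := by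
      have a1 := hpre (j+1) i (by omega)
      have a2 := hpre (j+1) j (by omega)
      rw [hij] at a1; rw [a2] at a1; exact a1.symm
    have a3 := hpre j i h
    rw [hij, e1] at a3
    exact hdis' j a3
  · have h' : j < i := by omega
    have e1 : y j = y i := by
      have a1 := hpre (i+1) j (by omega)
      have a2 := hpre (i+1) i (by omega)
      rw [← hij] at a1; rw [a2] at a1; exact a1.symm
    have a3 := hpre i j h'
    rw [← hij, e1] at a3
    exact hdis' i a3

/-- Every infinite concept class has either an infinite star set
(an infinite set of distinct points with witnessing concepts disagreeing with the center
exactly at one point each) or an infinite threshold sequence. -/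
theorem infinite_star_set_or_threshold_seq {X : Type*} (H : Set (X → Bool))
    (hH : H.Infinite) :
    (∃ (h : X → Bool) (x : ℕ → X) (g : ℕ → X → Bool), Function.Injective x ∧
      ∀ i : ℕ, g i ∈ H ∧ g i (x i) ≠ h (x i) ∧ ∀ j : ℕ, j ≠ i → g i (x j) = h (x j)) ∨
    (∃ (x : ℕ → X) (y : ℕ → Bool),
      (∀ n : ℕ, ∃ h ∈ H, ∀ i < n, h (x i) = y i) ∧
      (∀ k : ℕ, ∃ h ∈ H, (∀ i < k, h (x i) = y i) ∧ ∀ i : ℕ, k ≤ i → h (x i) ≠ y i)) := by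
  classical
  obtain ⟨x, y, hc, hxinj, hel⟩ := eluder_exists H hH
  obtain ⟨φ, b, hφ, hcol⟩ := ramsey_pairs (fun i j => hc i (x j) == y j)
  cases b with
  | true =>
    -- star set
    left
    have hxφ : Function.Injective (x ∘ φ) := hxinj.comp hφ.injective
    set center : X → Bool := fun z =>
      if hz : ∃ m, x (φ m) = z then y (φ hz.choose) else false with hcenter_def
    have hcen : ∀ m, center (x (φ m)) = y (φ m) := by
      intro m
      have hz : ∃ m', x (φ m') = x (φ m) := ⟨m, rfl⟩
      rw [hcenter_def]
      simp only [dif_pos hz]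
      congr 1
      exact congrArg φ (hxφ hz.choose_spec)
    refine ⟨center, x ∘ φ, fun m => hc (φ m), hxφ, fun m => ?_⟩
    obtain ⟨hmem, hdis, hpre⟩ := hel (φ m)
    refine ⟨hmem, by simpa [hcen m] using hdis, ?_⟩
    intro j hj
    rw [Function.comp_apply, hcen j]
    rcases Nat.lt_or_ge j m with h | h
    · exact hpre (φ j) (hφ h)
    · have h' : m < j := by omega
      have := hcol m j h'
      simpa using this
  | false =>
    -- threshold sequence
    right
    refine ⟨x ∘ φ, y ∘ φ, ?_, ?_⟩
    · intro n
      obtain ⟨hmem, _, hpre⟩ := hel (φ n)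
      exact ⟨hc (φ n), hmem, fun i hi => hpre (φ i) (hφ hi)⟩
    · intro k
      obtain ⟨hmem, hdis, hpre⟩ := hel (φ k)
      refine ⟨hc (φ k), hmem, fun i hi => hpre (φ i) (hφ hi), ?_⟩
      intro i hi
      rcases Nat.eq_or_lt_of_le hi with h | h
      · subst h; exact hdis
      · have := hcol k i h
        simpa using this
end

section
/- Any infinite concept class H has either an infinite star-eluder sequence or infinite Littlestone dimension. -/
/-!
Let `h` be an ultrafilter limit of `H`, so that every finite set of points is one on which
infinitely many members of `H` agree with `h`. Greedily choose `G j ∈ H` and points `z j` such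
that `G j` differs from `h` at `z j` but agrees with it at every earlier `z l`. Colour a pair
`m < n` by whether `G m` agrees with `h` at `z n`; by Ramsey's theorem some subsequence is
monochromatic. If the colour is "agree", the `z j` form an infinite star set centred at `h`.
If it is "disagree", `G j` agrees with `h` at `z l` exactly when `l < j`: a threshold sequence,
and binary search over the thresholds shatters mistake trees of every depth.
-/

open Filter

section

variable {X β : Type*}

theorem Set.Infinite.exists_forall_finset_infinite_eqOn [Finite β] {H : Set (X → β)}
    (hH : H.Infinite) : ∃ h : X → β, ∀ s : Finset X, {g ∈ H | Set.EqOn g h s}.Infinite := by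
  have : (cofinite ⊓ 𝓟 H).NeBot :=
    frequently_mem_iff_neBot.1 (frequently_cofinite_mem_iff_infinite.2 hH)
  set U := Ultrafilter.of (cofinite ⊓ 𝓟 H)
  have hU : (U : Filter (X → β)) ≤ cofinite ⊓ 𝓟 H := Ultrafilter.of_le _
  choose h hh using fun x => (U.map fun g => g x).eq_pure_of_finite
  refine ⟨h, fun s => frequently_cofinite_iff_infinite.1
    (Frequently.filter_mono ?_ (hU.trans inf_le_left))⟩
  have hUH : ∀ᶠ g in (U : Filter (X → β)), g ∈ H := hU.trans inf_le_right (mem_principal_self H)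
  have hs : ∀ᶠ g in (U : Filter (X → β)), ∀ x ∈ s, g x = h x := by
    refine (eventually_all_finset s).2 fun x _ => ?_
    exact show {b | b = h x} ∈ U.map fun g => g x by simp [hh x]
  exact (hUH.and hs).frequently

theorem Set.Infinite.exists_seq_eq_before_ne_at [Finite β] {H : Set (X → β)}
    (hH : H.Infinite) : ∃ (h : X → β) (G : ℕ → X → β) (z : ℕ → X), (∀ j, G j ∈ H) ∧
      (∀ l j, l < j → G j (z l) = h (z l)) ∧ ∀ j, G j (z j) ≠ h (z j) := by
  classical
  obtain ⟨h, hh⟩ := hH.exists_forall_finset_infinite_eqOn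
  obtain ⟨p, hpP, hpr⟩ := exists_seq_of_forall_finset_exists
    (fun p : (X → β) × X => p.1 ∈ H ∧ p.1 p.2 ≠ h p.2) (fun p q => q.1 p.2 = h p.2) fun s _ => by
      obtain ⟨g, ⟨hgH, hgs⟩, hgh⟩ :=
        ((hh (s.image Prod.snd)).sdiff (Set.finite_singleton h)).nonempty
      obtain ⟨x, hx⟩ := Function.ne_iff.1 hgh
      exact ⟨(g, x), ⟨hgH, hx⟩, fun q hq => hgs (Finset.mem_image_of_mem _ hq)⟩
  exact ⟨h, fun j => (p j).1, fun j => (p j).2, fun j => (hpP j).1, hpr, fun j => (hpP j).2⟩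

end

theorem exists_strictMono_forall_or_forall_not (c : ℕ → ℕ → Prop) :
    ∃ σ : ℕ → ℕ, StrictMono σ ∧
      ((∀ m n, m < n → c (σ m) (σ n)) ∨ ∀ m n, m < n → ¬ c (σ m) (σ n)) := by
  -- `B m` is the colour of almost every pair `(m, n)`; pigeonhole on `B` finishes.
  set V := Ultrafilter.of (atTop : Filter ℕ)
  set B : ℕ → Prop := fun m => ∀ᶠ n in (V : Filter ℕ), c m n
  have hB : ∀ m, ∀ᶠ n in (V : Filter ℕ), m < n ∧ (c m n ↔ B m) := by
    intro m
    refine Eventually.and (Ultrafilter.of_le atTop (eventually_gt_atTop m)) ?_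
    by_cases hm : B m
    · exact hm.mono fun n hn => iff_of_true hn hm
    · exact (Ultrafilter.eventually_not.2 hm).mono fun n hn => iff_of_false hn hm
  obtain ⟨t, -, ht⟩ := exists_seq_of_forall_finset_exists (fun _ => True)
    (fun m n => m < n ∧ (c m n ↔ B m)) fun s _ =>
      let ⟨n, hn⟩ := ((eventually_all_finset s).2 fun m _ => hB m).exists
      ⟨n, trivial, hn⟩
  have ht_mono : StrictMono t := fun m n hmn => (ht m n hmn).1
  by_cases hfreq : ∃ᶠ n in atTop, B (t n)
  · obtain ⟨ρ, hρ, hρB⟩ := extraction_of_frequently_atTop hfreq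
    exact ⟨t ∘ ρ, ht_mono.comp hρ, Or.inl fun m n hmn => (ht _ _ (hρ hmn)).2.2 (hρB m)⟩
  · obtain ⟨ρ, hρ, hρB⟩ := extraction_of_eventually_atTop (not_frequently.1 hfreq)
    exact ⟨t ∘ ρ, ht_mono.comp hρ, Or.inr fun m n hmn hc => hρB m ((ht _ _ (hρ hmn)).2.1 hc)⟩

section

variable {X : Type*}

/-- Block `k ≥ 1` of the sequence occupies the indices `nIdx k, …, nIdx k + k - 1`. -/
def IsInfiniteStarEluderSeq (H : Set (X → Bool)) (h : X → Bool) (x : ℕ → X) (y : ℕ → Bool) :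
    Prop :=
  (∀ n : ℕ, ∃ g ∈ H, ∀ i < n, g (x i) = y i) ∧
    ∀ k : ℕ, 1 ≤ k →
      (Function.Injective fun i : Fin k => x (nIdx k + i)) ∧
      ∀ i : Fin k, ∃ g ∈ H, (∀ m < nIdx k, g (x m) = y m) ∧
        g (x (nIdx k + i)) ≠ h (x (nIdx k + i)) ∧
        ∀ j : Fin k, j ≠ i → g (x (nIdx k + j)) = h (x (nIdx k + j))

/-- A node of the tree is addressed by the list of labels on the path from the root to it. -/
def ShattersMistakeTree (H : Set (X → Bool)) (d : ℕ) : Prop :=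
  ∃ t : List Bool → X, ∀ b : Fin d → Bool, ∃ h ∈ H,
    ∀ i : Fin d, h (t ((List.ofFn b).take i)) = b i

theorem isInfiniteStarEluderSeq_of_star {H : Set (X → Bool)} {h : X → Bool} {x : ℕ → X}
    {G : ℕ → X → Bool} (hGH : ∀ j, G j ∈ H) (hstar : ∀ j l, G j (x l) = h (x l) ↔ l ≠ j) :
    IsInfiniteStarEluderSeq H h x (h ∘ x) := by
  have hx : Function.Injective x := fun l j hlj => not_not.1 fun hne =>
    (hstar j j).1 (hlj ▸ (hstar j l).2 hne) rfl
  refine ⟨fun n => ⟨G n, hGH n, fun i hi => (hstar n i).2 hi.ne⟩, fun k _ => ⟨?_, fun i => ?_⟩⟩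
  · exact fun i j hij => Fin.ext (by simpa using hx hij)
  · refine ⟨G (nIdx k + i), hGH _, fun m hm => (hstar _ m).2 (by omega),
      fun heq => (hstar _ _).1 heq rfl, fun j hji => (hstar _ _).2 ?_⟩
    exact fun heq => hji (Fin.ext (by omega))

theorem exists_tree_of_threshold {u : ℕ → X} {c : ℕ → Bool} {f : ℕ → X → Bool}
    (ht : ∀ j m, f j (u m) = c m ↔ m < j) (d a : ℕ) :
    ∃ t : List Bool → X, ∀ b : Fin d → Bool, ∃ j, a < j ∧ j ≤ a + 2 ^ d ∧
      ∀ i : Fin d, f j (t ((List.ofFn b).take i)) = b i := by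
  induction d generalizing a with
  | zero => exact ⟨fun _ => u 0, fun b => ⟨a + 1, by omega, by simp, fun i => i.elim0⟩⟩
  | succ d ih =>
    choose T hT using ih
    -- The root `u (a + 2 ^ d)` splits the thresholds `(a, a + 2 ^ (d + 1)]` into two halves.
    let side : Bool → ℕ := fun β => if β = c (a + 2 ^ d) then a + 2 ^ d else a
    refine ⟨fun | [] => u (a + 2 ^ d) | β :: L => T (side β) L, fun b => ?_⟩
    obtain ⟨j, hlo, hhi, hj⟩ := hT (side (b 0)) (Fin.tail b)
    have hside : a < j ∧ j ≤ a + 2 ^ (d + 1) ∧ (a + 2 ^ d < j ↔ b 0 = c (a + 2 ^ d)) := by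
      rw [pow_succ]
      by_cases hb : b 0 = c (a + 2 ^ d) <;>
        simp only [side, hb, if_true, if_false, iff_true, iff_false] at hlo hhi ⊢ <;> omega
    refine ⟨j, hside.1, hside.2.1, fun i => i.cases ?_ fun i => ?_⟩
    · have hroot := (ht j (a + 2 ^ d)).trans hside.2.2
      show f j (u (a + 2 ^ d)) = b 0
      revert hroot
      generalize f j (u (a + 2 ^ d)) = p
      generalize b 0 = q
      cases p <;> cases q <;> cases c (a + 2 ^ d) <;> simp
    · simp only [List.ofFn_succ, Fin.val_succ, List.take_succ_cons]
      exact hj i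

theorem shattersMistakeTree_of_threshold {H : Set (X → Bool)} {u : ℕ → X} {c : ℕ → Bool}
    {f : ℕ → X → Bool} (hfH : ∀ j, f j ∈ H) (ht : ∀ j m, f j (u m) = c m ↔ m < j) (d : ℕ) :
    ShattersMistakeTree H d :=
  let ⟨t, htree⟩ := exists_tree_of_threshold ht d 0
  ⟨t, fun b => let ⟨j, _, _, hj⟩ := htree b; ⟨f j, hfH j, hj⟩⟩

end

/-- Any infinite concept class `H` has either an infinite star-eluder sequence
(centered at some classifier) or infinite Littlestone dimension (for every depth `d` there is
a complete binary mistake tree of depth `d` shattered by `H`). -/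
theorem infinite_star_eluder_or_infinite_littlestone {X : Type*} (H : Set (X → Bool))
    (hH : H.Infinite) :
    (∃ (h : X → Bool) (x : ℕ → X) (y : ℕ → Bool),
      (∀ n : ℕ, ∃ g ∈ H, ∀ i < n, g (x i) = y i) ∧
      (∀ k : ℕ, 1 ≤ k →
        (Function.Injective fun i : Fin k => x (nIdx k + i)) ∧
        ∀ i : Fin k, ∃ g ∈ H, (∀ m < nIdx k, g (x m) = y m) ∧
          g (x (nIdx k + i)) ≠ h (x (nIdx k + i)) ∧
          ∀ j : Fin k, j ≠ i → g (x (nIdx k + j)) = h (x (nIdx k + j)))) ∨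
    (∀ d : ℕ, ∃ t : List Bool → X, ∀ b : Fin d → Bool, ∃ h ∈ H,
      ∀ i : Fin d, h (t ((List.ofFn b).take i)) = b i) := by
  obtain ⟨h, G, z, hGH, hbefore, hat⟩ := hH.exists_seq_eq_before_ne_at
  obtain ⟨σ, hσ, hafter | hafter⟩ :=
    exists_strictMono_forall_or_forall_not fun m n => G m (z n) = h (z n)
  · refine Or.inl ⟨h, z ∘ σ, h ∘ z ∘ σ,
      isInfiniteStarEluderSeq_of_star (fun j => hGH (σ j)) fun j l => ?_⟩
    rcases lt_trichotomy l j with hlj | rfl | hjl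
    · simpa [hlj.ne] using hbefore _ _ (hσ hlj)
    · simpa using hat (σ l)
    · simpa [hjl.ne'] using hafter _ _ hjl
  · refine Or.inr (shattersMistakeTree_of_threshold (u := z ∘ σ) (c := h ∘ z ∘ σ)
      (fun j => hGH (σ j)) fun j m => ?_)
    rcases lt_trichotomy m j with hmj | rfl | hjm
    · simpa [hmj] using hbefore _ _ (hσ hmj)
    · simpa using hat (σ m)
    · simpa [hjm.not_gt] using hafter _ _ hjm
end

section
/- Let H be a concept class, P a realizable distribution centered at a target h (i.e., the sample labels agree with h almost surely). For any realizable sample S_n consistent with h, the version space compression set Ĉ_n (the smallest subset of S_n inducing the same version space as S_n) has size at most the star number of h: |Ĉ_n| ≤ 𝔰_h(H). -/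
/-- For a sample `S` consistent with a target `h`, the (minimal) version space
compression set `C` is a star set of `H` centered at `h`; hence `|C| ≤ 𝔰_h(H)`, the star
number of `h`. -/
theorem compression_set_card_le_star_number {X : Type*} (H : Set (X → Bool))
    (h : X → Bool) (S C : Finset (X × Bool))
    (hcons : ∀ p ∈ S, h p.1 = p.2)
    (hCS : C ⊆ S)
    (hV : {g ∈ H | ∀ p ∈ C, g p.1 = p.2} = {g ∈ H | ∀ p ∈ S, g p.1 = p.2})
    (hmin : ∀ C' ⊆ S,
      {g ∈ H | ∀ p ∈ C', g p.1 = p.2} = {g ∈ H | ∀ p ∈ S, g p.1 = p.2} →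
      C.card ≤ C'.card) :
    ∃ pts : Fin C.card → X, Function.Injective pts ∧
      ∀ i : Fin C.card, ∃ g ∈ H, g (pts i) ≠ h (pts i) ∧
        ∀ j : Fin C.card, j ≠ i → g (pts j) = h (pts j) := by
  classical
  set e := C.equivFin with he
  refine ⟨fun i => ((e.symm i : X × Bool)).1, ?_, ?_⟩
  · intro i j hij
    change (e.symm i : X × Bool).1 = (e.symm j : X × Bool).1 at hij
    have h1 : (e.symm i : X × Bool).2 = (e.symm j : X × Bool).2 := by
      rw [← hcons _ (hCS (e.symm i).2), ← hcons _ (hCS (e.symm j).2), hij]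
    have hpq : (e.symm i : X × Bool) = (e.symm j : X × Bool) := Prod.ext hij h1
    simpa using e.symm.injective (Subtype.ext hpq)
  · intro i
    set p : X × Bool := (e.symm i : X × Bool) with hp
    have hpC : p ∈ C := (e.symm i).2
    have hsub : C.erase p ⊆ S := (Finset.erase_subset _ _).trans hCS
    have hne : {g ∈ H | ∀ q ∈ C.erase p, g q.1 = q.2} ≠ {g ∈ H | ∀ q ∈ S, g q.1 = q.2} := by
      intro heq
      have hle := hmin _ hsub heq
      have hlt : (C.erase p).card < C.card := Finset.card_erase_lt_of_mem hpC
      omega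
    have hsup : {g ∈ H | ∀ q ∈ S, g q.1 = q.2} ⊆ {g ∈ H | ∀ q ∈ C.erase p, g q.1 = q.2} := by
      rw [← hV]
      rintro g ⟨hgH, hg⟩
      exact ⟨hgH, fun q hq => hg q (Finset.mem_of_mem_erase hq)⟩
    obtain ⟨g, hgmem, hgnot⟩ :
        ∃ g, g ∈ {g ∈ H | ∀ q ∈ C.erase p, g q.1 = q.2} ∧
          g ∉ {g ∈ H | ∀ q ∈ S, g q.1 = q.2} := by
      by_contra hcon
      push_neg at hcon
      exact hne (Set.Subset.antisymm hcon hsup)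
    obtain ⟨hgH, hgerase⟩ := hgmem
    have hgnotC : g ∉ {g ∈ H | ∀ q ∈ C, g q.1 = q.2} := by rw [hV]; exact hgnot
    have hbad : ∃ q ∈ C, g q.1 ≠ q.2 := by
      by_contra hcon
      push_neg at hcon
      exact hgnotC ⟨hgH, hcon⟩
    obtain ⟨q, hqC, hqne⟩ := hbad
    have hqp : q = p := by
      by_contra hqp
      exact hqne (hgerase q (Finset.mem_erase.2 ⟨hqp, hqC⟩))
    refine ⟨g, hgH, ?_, ?_⟩
    · rw [hcons p (hCS hpC)]
      subst hqp; exact hqne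
    · intro j hji
      set q' : X × Bool := (e.symm j : X × Bool) with hq'
      have hq'p : q' ≠ p := by
        intro hEq
        have h2 : e.symm j = e.symm i := Subtype.ext hEq
        exact hji (e.symm.injective h2)
      have : q' ∈ C.erase p := Finset.mem_erase.2 ⟨hq'p, (e.symm j).2⟩
      rw [hcons q' (hCS (e.symm j).2)]
      exact hgerase q' this
end

section
/- For the class of threshold classifiers on the natural numbers with the distribution P putting mass 2^{-t} on the point t with label 0 for each t ≥ 1, the worst-case ERM learner (which outputs the threshold just above the maximum observed sample point) has expected error at least (1/2n)(1 - 2/n)^n for every n ≥ 3, hence at least 1/(18n). -/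
/-!
If all `n` sample points lie in `{1, …, k}`, the error `2^{-T}` of the ERM is at least `2^{-k}`,
so the expected error is at least `2^{-k} (1 - 2^{-k})^n`. Taking `2n ≤ 2^k ≤ 4n` and applying
Bernoulli's inequality bounds this below by `1/(8n)`, which dominates both claimed bounds since
`(1 - 2/n)^n ≤ e^{-2} ≤ 1/4`.
-/

open MeasureTheory ENNReal

/-- The distribution on `ℕ` putting mass `2^{-t}` on the point `t` for each `t ≥ 1`
(labels are all `0`, so we only track the marginal on points). -/
noncomputable def geomMeasure : Measure ℕ :=
  Measure.sum fun t : ℕ => (((2 : ℝ≥0∞) ^ (t + 1))⁻¹) • Measure.dirac (t + 1)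

lemma geomMeasure_apply (A : Set ℕ) :
    geomMeasure A = ∑' t : ℕ, 2⁻¹ ^ (t + 1) * A.indicator 1 (t + 1) := by
  rw [geomMeasure, Measure.sum_apply _ .of_discrete]
  simp [ENNReal.inv_pow]

lemma tsum_inv_two_pow_succ : ∑' t : ℕ, (2⁻¹ : ℝ≥0∞) ^ (t + 1) = 1 := by
  simp [ENNReal.tsum_geometric_add_one, ENNReal.inv_mul_cancel]

instance : IsProbabilityMeasure geomMeasure :=
  ⟨by simp [geomMeasure_apply, tsum_inv_two_pow_succ]⟩

lemma geomMeasure_Ioi (k : ℕ) : geomMeasure (Set.Ioi k) = 2⁻¹ ^ k := by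
  have hsupp :
      (fun t => 2⁻¹ ^ (t + 1) * (Set.Ioi k).indicator (1 : ℕ → ℝ≥0∞) (t + 1)).support ⊆
        Set.range (· + k) := by
    intro t ht
    have hkt : k ≤ t := by
      by_contra h
      exact ht (by simp [Set.indicator_of_notMem (show t + 1 ∉ Set.Ioi k by simp; omega)])
    exact ⟨t - k, by simp [hkt]⟩
  rw [geomMeasure_apply, ← (add_left_injective k).tsum_eq hsupp]
  have hmem (t : ℕ) : t + k + 1 ∈ Set.Ioi k := by simp
  simp only [Set.indicator_of_mem (hmem _), Pi.one_apply, mul_one]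
  simp_rw [show ∀ t, (2⁻¹ : ℝ≥0∞) ^ (t + k + 1) = 2⁻¹ ^ (t + 1) * 2⁻¹ ^ k from
    fun t => by ring]
  rw [ENNReal.tsum_mul_right, tsum_inv_two_pow_succ, one_mul]

lemma geomMeasure_Iic (k : ℕ) : geomMeasure (Set.Iic k) = 1 - 2⁻¹ ^ k := by
  rw [← Set.compl_Ioi, prob_compl_eq_one_sub measurableSet_Ioi, geomMeasure_Ioi]

lemma pow_mul_measure_Iic_pow_le_lintegral_pow_sup {ι : Type*} [Fintype ι] (μ : Measure ℕ)
    [SigmaFinite μ] {r : ℝ≥0∞} (hr : r ≤ 1) (k : ℕ) :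
    r ^ k * μ (Set.Iic k) ^ Fintype.card ι ≤
      ∫⁻ s : ι → ℕ, r ^ Finset.univ.sup s ∂Measure.pi fun _ => μ := by
  have hsub :
      Set.univ.pi (fun _ => Set.Iic k) ⊆ {s : ι → ℕ | r ^ k ≤ r ^ Finset.univ.sup s} :=
    fun s hs => pow_le_pow_of_le_one zero_le hr (Finset.sup_le fun i _ => hs i (Set.mem_univ i))
  calc r ^ k * μ (Set.Iic k) ^ Fintype.card ι
      = r ^ k * Measure.pi (fun _ => μ) (Set.univ.pi fun _ => Set.Iic k) := by
        rw [Measure.pi_pi (fun _ : ι => μ), Finset.prod_const, Finset.card_univ]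
    _ ≤ r ^ k * Measure.pi (fun _ => μ) {s | r ^ k ≤ r ^ Finset.univ.sup s} := by gcongr
    _ ≤ _ := mul_meas_ge_le_lintegral .of_discrete _

lemma exists_two_pow_between {n : ℕ} (hn : n ≠ 0) :
    ∃ k, 2 * n ≤ 2 ^ k ∧ 2 ^ k ≤ 4 * n := by
  refine ⟨Nat.log 2 n + 2, ?_, ?_⟩
  · have := Nat.lt_pow_succ_log_self (by norm_num : 1 < 2) n
    rw [pow_succ]; omega
  · have := Nat.pow_log_le_self 2 hn
    rw [pow_succ, pow_succ]; omega

lemma one_div_eight_mul_le_mul_one_sub_pow {n : ℕ} (hn : n ≠ 0) {x : ℝ}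
    (hx₁ : 1 / (4 * n) ≤ x) (hx₂ : x ≤ 1 / (2 * n)) :
    1 / (8 * n) ≤ x * (1 - x) ^ n := by
  have hn' : (1 : ℝ) ≤ n := by exact_mod_cast Nat.one_le_iff_ne_zero.mpr hn
  have hx₀ : 0 ≤ x := le_trans (by positivity) hx₁
  have hnx : n * x ≤ 1 / 2 := by
    calc n * x ≤ n * (1 / (2 * n)) := by gcongr
      _ = 1 / 2 := by field_simp
  have hbernoulli : 1 / 2 ≤ (1 - x) ^ n := by
    have h := one_add_mul_le_pow (a := -x) (by nlinarith) n
    rw [← sub_eq_add_neg] at h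
    linarith
  calc (1 / (8 * n) : ℝ) = 1 / (4 * n) * (1 / 2) := by field_simp; norm_num
    _ ≤ x * (1 - x) ^ n := by gcongr

lemma one_sub_two_div_pow_le {n : ℕ} (hn : 2 ≤ n) : (1 - 2 / n : ℝ) ^ n ≤ 1 / 4 := by
  have hexp : 4 ≤ Real.exp 2 := by
    rw [show (2 : ℝ) = 1 + 1 by norm_num, Real.exp_add]
    nlinarith [Real.exp_one_gt_two]
  calc (1 - 2 / n : ℝ) ^ n ≤ Real.exp (-2) :=
        Real.one_sub_div_pow_le_exp_neg (by exact_mod_cast hn)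
    _ ≤ 1 / 4 := by rw [Real.exp_neg, one_div]; exact inv_anti₀ (by norm_num) hexp

lemma ofReal_one_div_eight_mul_le_lintegral {n : ℕ} (hn : n ≠ 0) :
    ENNReal.ofReal (1 / (8 * n)) ≤
      ∫⁻ s : Fin n → ℕ, 2⁻¹ ^ Finset.univ.sup s ∂Measure.pi fun _ => geomMeasure := by
  obtain ⟨k, hk₁, hk₂⟩ := exists_two_pow_between hn
  have hx : ((2 : ℝ≥0∞)⁻¹) ^ k = ENNReal.ofReal ((1 / 2) ^ k) := by
    rw [ENNReal.ofReal_pow (by norm_num), one_div, ENNReal.ofReal_inv_of_pos two_pos,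
      ENNReal.ofReal_ofNat]
  have hx₁ : 1 / (4 * n : ℝ) ≤ (1 / 2) ^ k := by
    rw [one_div_pow]; gcongr; exact_mod_cast hk₂
  have hx₂ : (1 / 2 : ℝ) ^ k ≤ 1 / (2 * n) := by
    rw [one_div_pow]; gcongr; exact_mod_cast hk₁
  calc ENNReal.ofReal (1 / (8 * n))
      ≤ ENNReal.ofReal ((1 / 2) ^ k * (1 - (1 / 2) ^ k) ^ n) :=
        ENNReal.ofReal_le_ofReal (one_div_eight_mul_le_mul_one_sub_pow hn hx₁ hx₂)
    _ = 2⁻¹ ^ k * geomMeasure (Set.Iic k) ^ n := by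
        have hx₀ : (0 : ℝ) ≤ (1 / 2) ^ k := by positivity
        have hx₁ : (0 : ℝ) ≤ 1 - (1 / 2) ^ k := by
          rw [sub_nonneg]; exact pow_le_one₀ (by norm_num) (by norm_num)
        rw [geomMeasure_Iic, hx, ← ENNReal.ofReal_one, ← ENNReal.ofReal_sub _ hx₀,
          ← ENNReal.ofReal_pow hx₁, ← ENNReal.ofReal_mul hx₀]
    _ ≤ _ := by
        simpa using
          pow_mul_measure_Iic_pow_le_lintegral_pow_sup (ι := Fin n) geomMeasure (by norm_num) k

/-- For threshold classifiers on ℕ with `P{(t,0)} = 2^{-t}` for `t ≥ 1`, the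
worst-case ERM outputs the threshold just above the maximum observed point `T`, incurring
error `2^{-T}`.  For every `n ≥ 3` its expected error is at least `(1/(2n))(1 - 2/n)^n`,
hence at least `1/(18n)`. -/
theorem threshold_erm_lower_bound (n : ℕ) (hn : 3 ≤ n) :
    ENNReal.ofReal ((1 / (2 * (n : ℝ))) * (1 - 2 / (n : ℝ)) ^ n) ≤
      (∫⁻ s : Fin n → ℕ, ((2 : ℝ≥0∞)⁻¹) ^ (Finset.univ.sup s)
        ∂(Measure.pi fun _ => geomMeasure)) ∧
    ENNReal.ofReal (1 / (18 * (n : ℝ))) ≤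
      (∫⁻ s : Fin n → ℕ, ((2 : ℝ≥0∞)⁻¹) ^ (Finset.univ.sup s)
        ∂(Measure.pi fun _ => geomMeasure)) := by
  have hlower := ofReal_one_div_eight_mul_le_lintegral (n := n) (by omega)
  refine ⟨(ENNReal.ofReal_le_ofReal ?_).trans hlower, (ENNReal.ofReal_le_ofReal ?_).trans hlower⟩
  · calc 1 / (2 * n) * (1 - 2 / n : ℝ) ^ n ≤ 1 / (2 * n) * (1 / 4) := by
          gcongr; exact one_sub_two_div_pow_le (by omega)
      _ = 1 / (8 * n) := by field_simp; norm_num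
  · gcongr; norm_num
end

section
/- For the class of threshold classifiers on ℕ under the geometric all-zero-label distribution (mass 2^{-t} on point t with label 0), the worst-case ERM's expected error is at most 1/(n+1) for every n: Σ_{t≥1} 2^{-t-1}[(1 - 2^{-t})^n - (1 - 2^{-(t-1)})^n] ≤ 1/(n+1). -/
lemma my_pow_sub_pow_ge (a b : ℝ) (ha : 0 ≤ a) (hab : a ≤ b) (n : ℕ) :
    ((n : ℝ) + 1) * a ^ n * (b - a) ≤ b ^ (n + 1) - a ^ (n + 1) := by
  induction n with
  | zero => norm_num
  | succ n ih =>
    have hb : 0 ≤ b := le_trans ha hab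
    have h1 : b * (((n : ℝ) + 1) * a ^ n * (b - a)) ≤ b * (b ^ (n + 1) - a ^ (n + 1)) :=
      mul_le_mul_of_nonneg_left ih hb
    have h2 : 0 ≤ a ^ (n + 1) * (b - a) :=
      mul_nonneg (pow_nonneg ha _) (sub_nonneg.mpr hab)
    have h3 : a ^ n * (b - a) * (b - a) ≥ 0 :=
      mul_nonneg (mul_nonneg (pow_nonneg ha _) (sub_nonneg.mpr hab)) (sub_nonneg.mpr hab)
    push_cast
    ring_nf
    ring_nf at h1 h2 h3
    nlinarith [pow_nonneg ha n, pow_nonneg hb n]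

/-- For threshold classifiers on ℕ under the geometric all-zero-label
distribution (mass `2^{-t}` on point `t`, `t ≥ 1`), the worst-case ERM's expected error,
which equals `Σ_{t≥1} 2^{-t-1}[(1 - 2^{-t})^n - (1 - 2^{-(t-1)})^n]`, is at most
`1/(n+1)` for every `n`.  (Below the sum index is shifted: `t` ranges over `ℕ` and
represents `t+1 ≥ 1`.) -/
theorem threshold_erm_upper_bound (n : ℕ) :
    ∑' t : ℕ, ((2 : ℝ)⁻¹) ^ (t + 2) *
        ((1 - (2 : ℝ)⁻¹ ^ (t + 1)) ^ n - (1 - (2 : ℝ)⁻¹ ^ t) ^ n)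
      ≤ 1 / ((n : ℝ) + 1) := by
  have hn1 : (0 : ℝ) < (n : ℝ) + 1 := by positivity
  set f : ℕ → ℝ := fun t =>
    ((2 : ℝ)⁻¹) ^ (t + 2) * ((1 - (2 : ℝ)⁻¹ ^ (t + 1)) ^ n - (1 - (2 : ℝ)⁻¹ ^ t) ^ n)
    with hf
  set c : ℕ → ℝ := fun t => (1 - (2 : ℝ)⁻¹ ^ (t + 1)) ^ (n + 1) / ((n : ℝ) + 1) with hc
  have hle1 : ∀ t : ℕ, (2 : ℝ)⁻¹ ^ t ≤ 1 := fun t =>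
    pow_le_one₀ (by norm_num) (by norm_num)
  have hmono : ∀ t : ℕ, (2 : ℝ)⁻¹ ^ (t + 1) ≤ (2 : ℝ)⁻¹ ^ t := fun t =>
    pow_le_pow_of_le_one (by norm_num) (by norm_num) (Nat.le_succ t)
  have hfnonneg : ∀ t : ℕ, 0 ≤ f t := by
    intro t
    apply mul_nonneg (by positivity)
    have := pow_le_pow_left₀ (a := 1 - (2 : ℝ)⁻¹ ^ t) (b := 1 - (2 : ℝ)⁻¹ ^ (t + 1))
      (by linarith [hle1 t]) (by linarith [hmono t]) n
    linarith
  have key : ∀ t : ℕ, f t ≤ c (t + 1) - c t := by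
    intro t
    have ha : (0 : ℝ) ≤ 1 - (2 : ℝ)⁻¹ ^ (t + 1) := by linarith [hle1 (t + 1)]
    have hab : (1 : ℝ) - (2 : ℝ)⁻¹ ^ (t + 1) ≤ 1 - (2 : ℝ)⁻¹ ^ (t + 2) := by
      linarith [hmono (t + 1)]
    have hdiff : (1 - (2 : ℝ)⁻¹ ^ (t + 2)) - (1 - (2 : ℝ)⁻¹ ^ (t + 1)) = (2 : ℝ)⁻¹ ^ (t + 2) := by
      have : (2 : ℝ)⁻¹ ^ (t + 1) = 2 * (2 : ℝ)⁻¹ ^ (t + 2) := by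
        rw [pow_succ]; ring
      linarith
    have hkey := my_pow_sub_pow_ge _ _ ha hab n
    rw [hdiff] at hkey
    have hstep : f t ≤ (2 : ℝ)⁻¹ ^ (t + 2) * (1 - (2 : ℝ)⁻¹ ^ (t + 1)) ^ n := by
      rw [hf]
      have h0 : (0 : ℝ) ≤ (1 - (2 : ℝ)⁻¹ ^ t) ^ n :=
        pow_nonneg (by linarith [hle1 t]) n
      have h2 : (0 : ℝ) ≤ (2 : ℝ)⁻¹ ^ (t + 2) := by positivity
      nlinarith
    calc f t ≤ (2 : ℝ)⁻¹ ^ (t + 2) * (1 - (2 : ℝ)⁻¹ ^ (t + 1)) ^ n := hstep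
      _ ≤ c (t + 1) - c t := by
          rw [hc]
          simp only
          have h2 : t + 1 + 1 = t + 2 := by omega
          rw [h2, div_sub_div_same, le_div_iff₀ hn1]
          linear_combination hkey
  apply Real.tsum_le_of_sum_range_le hfnonneg
  intro N
  calc ∑ t ∈ Finset.range N, f t
      ≤ ∑ t ∈ Finset.range N, (c (t + 1) - c t) :=
        Finset.sum_le_sum fun t _ => key t
    _ = c N - c 0 := Finset.sum_range_sub c N
    _ ≤ c N := by
        have : (0 : ℝ) ≤ c 0 := by
          rw [hc]
          have : (0 : ℝ) ≤ 1 - (2 : ℝ)⁻¹ ^ (0 + 1) := by norm_num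
          positivity
        linarith
    _ ≤ 1 / ((n : ℝ) + 1) := by
        rw [hc]
        simp only
        rw [div_le_div_iff₀ hn1 hn1]
        have h1 : (1 - (2 : ℝ)⁻¹ ^ (N + 1)) ^ (n + 1) ≤ 1 :=
          pow_le_one₀ (by linarith [hle1 (N + 1)]) (by linarith [pow_nonneg (by norm_num : (0:ℝ) ≤ 2⁻¹) (N+1)])
        nlinarith
end

section
/- Let n_k = k(k-1)/2 over natural k ≥ 1. For the class of singletons over a countable union of disjoint blocks X_k of size k, any infinite sequence consisting of one point from each block with label 0 is an infinite star-eluder sequence centered at the all-zeros function, and the class has no infinite Littlestone tree (its Littlestone dimension is 1). -/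
/-- The instance space: a countable union of pairwise disjoint blocks, where block `k`
(for `k : ℕ`) has `k+1` points (so the blocks have sizes `1, 2, 3, …`). -/
abbrev BlockSpace := Σ k : ℕ, Fin (k + 1)

/-- The class of singletons on `BlockSpace`. -/
def singletonClass : Set (BlockSpace → Bool) :=
  {f | ∃ a : BlockSpace, ∀ z : BlockSpace, f z = decide (z = a)}

/-- For the class of singletons over a countable union of disjoint finite
blocks, any infinite sequence consisting of one point from each block, labeled `0`, is an
infinite star-eluder sequence centered at the all-zeros function; moreover the class has no
shattered mistake tree of depth `2` but has one of depth `1` (its Littlestone dimension is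
`1`), hence no infinite Littlestone tree. -/
theorem singletons_star_eluder_and_littlestone_one :
    (∀ x : ℕ → BlockSpace, (∀ i : ℕ, (x i).1 = i) →
      (∀ n : ℕ, ∃ g ∈ singletonClass, ∀ i < n, g (x i) = false) ∧
      (∀ k : ℕ, 1 ≤ k →
        (Function.Injective fun i : Fin k => x (nIdx k + i)) ∧
        ∀ i : Fin k, ∃ g ∈ singletonClass,
          (∀ m < nIdx k, g (x m) = false) ∧
          g (x (nIdx k + i)) ≠ false ∧
          ∀ j : Fin k, j ≠ i → g (x (nIdx k + j)) = false)) ∧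
    (¬ ∃ t : List Bool → BlockSpace, ∀ b : Fin 2 → Bool, ∃ h ∈ singletonClass,
        ∀ i : Fin 2, h (t ((List.ofFn b).take i)) = b i) ∧
    (∃ t : List Bool → BlockSpace, ∀ b : Fin 1 → Bool, ∃ h ∈ singletonClass,
        ∀ i : Fin 1, h (t ((List.ofFn b).take i)) = b i) := by
  refine ⟨?_, ?_, ?_⟩
  · intro x hx
    have hne : ∀ m n : ℕ, m ≠ n → x m ≠ x n := by
      intro m n hmn h
      exact hmn ((hx m).symm.trans (by rw [h, hx n]))
    refine ⟨?_, ?_⟩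
    · intro n
      refine ⟨fun z => decide (z = x n), ⟨x n, fun z => rfl⟩, ?_⟩
      intro i hi
      simp [hne i n (Nat.ne_of_lt hi)]
    · intro k hk
      constructor
      · intro i j hij
        have h' : nIdx k + (i : ℕ) = nIdx k + (j : ℕ) := by
          by_contra h
          exact hne _ _ h hij
        exact Fin.ext (Nat.add_left_cancel h')
      · intro i
        refine ⟨fun z => decide (z = x (nIdx k + i)), ⟨_, fun z => rfl⟩, ?_, ?_, ?_⟩
        · intro m hm
          have : m ≠ nIdx k + i := by omega
          simp [hne _ _ this]
        · simp
        · intro j hji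
          have h' : nIdx k + (j : ℕ) ≠ nIdx k + (i : ℕ) := by
            intro h; exact hji (Fin.ext (Nat.add_left_cancel h))
          simp [hne _ _ h']
  · rintro ⟨t, ht⟩
    obtain ⟨h₁, ⟨a₁, ha₁⟩, H₁⟩ := ht ![true, true]
    obtain ⟨h₂, ⟨a₂, ha₂⟩, H₂⟩ := ht ![true, false]
    have e10 := H₁ 0
    have e11 := H₁ 1
    have e20 := H₂ 0
    have e21 := H₂ 1
    simp [ha₁, ha₂] at e10 e11 e20 e21
    exact e21 (by rw [e11, ← e10, e20])
  · refine ⟨fun _ => ⟨0, 0⟩, ?_⟩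
    intro b
    by_cases hb : b 0 = true
    · refine ⟨fun z => decide (z = ⟨0, 0⟩), ⟨⟨0, 0⟩, fun z => rfl⟩, ?_⟩
      intro i; fin_cases i; simp [hb]
    · refine ⟨fun z => decide (z = ⟨1, 0⟩), ⟨⟨1, 0⟩, fun z => rfl⟩, ?_⟩
      intro i; fin_cases i
      simp only [Bool.not_eq_true] at hb
      simp [hb]
end

section
/- If a concept class H does not have an infinite eluder sequence centered at a target h*, then for every realizable distribution P centered at h* there is a finite constant k = k(P) such that every ERM learner satisfies E[er_P(ĥ_n)] ≤ 2^{-⌊n/k⌋} for all n; i.e., h* is universally learnable by ERM at exponential rate. -/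
/-!
Call an `n`-sample bad when its version space still contains a hypothesis of positive error.
The expected error of an ERM after `n` samples is at most the probability `β n` of a bad
sample; since neither the integrand nor the bad event need be measurable, `β n` is an inner
probability. A bad `(a + b)`-sample splits into a bad `a`-sample and a bad `b`-sample, so
`β (a + b) ≤ β a * β b` and `β n ≤ β k ^ ⌊n / k⌋`; it remains to find `k` with `β k ≤ 1 / 2`.

Otherwise, inner measure being continuous along decreasing sequences, the i.i.d. sequences all
of whose prefixes are bad have positive inner probability. Given a version space `V` for which
the bad sequences have positive inner probability `β`, some correct point `z` is misclassified
by a hypothesis of `V` while `{h ∈ V | h z.1 = z.2}` keeps this property. If not, almost every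
correct first point that keeps the conditional probability positive leaves `V` unchanged, so a
hypothesis of `V` with error `ε > 0` is right on all of them and `β ≤ (1 - ε) β`. Iterating
yields an infinite eluder sequence centred at `h*`.
-/

open MeasureTheory ENNReal

namespace MeasureTheory

section InnerMeasure

variable {α β : Type*} [MeasurableSpace α] [MeasurableSpace β] {μ : Measure α} {s t : Set α}

noncomputable def innerMeasure (μ : Measure α) (s : Set α) : ℝ≥0∞ :=
  ⨆ (t : Set α) (_ : MeasurableSet t) (_ : t ⊆ s), μ t

lemma measure_le_innerMeasure (ht : MeasurableSet t) (hts : t ⊆ s) : μ t ≤ innerMeasure μ s :=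
  le_iSup₂_of_le t ht (le_iSup_of_le hts le_rfl)

lemma innerMeasure_le_measure : innerMeasure μ s ≤ μ s :=
  iSup₂_le fun _ _ => iSup_le fun hts => measure_mono hts

lemma innerMeasure_mono (hst : s ⊆ t) : innerMeasure μ s ≤ innerMeasure μ t :=
  iSup₂_le fun _ hu => iSup_le fun hus => measure_le_innerMeasure hu (hus.trans hst)

lemma nonempty_of_innerMeasure_pos (h : 0 < innerMeasure μ s) : s.Nonempty :=
  nonempty_of_measure_ne_zero (h.trans_le innerMeasure_le_measure).ne'

lemma innerMeasure_eq_sub_measure_compl [IsFiniteMeasure μ] (s : Set α) :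
    innerMeasure μ s = μ Set.univ - μ sᶜ := by
  refine le_antisymm (iSup₂_le fun t ht => iSup_le fun hts => ?_) ?_
  · refine ENNReal.le_sub_of_add_le_right (measure_ne_top μ _) ?_
    rw [← measure_add_measure_compl ht]
    gcongr
  · have hM := measurableSet_toMeasurable μ sᶜ
    rw [← measure_toMeasurable sᶜ, ← measure_compl hM (measure_ne_top μ _)]
    exact measure_le_innerMeasure hM.compl
      (Set.compl_subset_comm.mp (subset_toMeasurable μ sᶜ))

lemma Antitone.innerMeasure_iInter [IsFiniteMeasure μ] {s : ℕ → Set α} (hs : Antitone s) :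
    innerMeasure μ (⋂ n, s n) = ⨅ n, innerMeasure μ (s n) := by
  simp_rw [innerMeasure_eq_sub_measure_compl, Set.compl_iInter]
  rw [Monotone.measure_iUnion fun m n hmn => Set.compl_subset_compl.mpr (hs hmn),
    ENNReal.sub_iSup (measure_ne_top μ _)]

lemma MeasurePreserving.innerMeasure_le_preimage {ν : Measure β} {f : α → β}
    (hf : MeasurePreserving f μ ν) (s : Set β) :
    innerMeasure ν s ≤ innerMeasure μ (f ⁻¹' s) :=
  iSup₂_le fun t ht => iSup_le fun hts => by
    rw [← hf.measure_preimage ht.nullMeasurableSet]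
    exact measure_le_innerMeasure (ht.preimage hf.measurable) (Set.preimage_mono hts)

lemma lintegral_le_innerMeasure {f : α → ℝ≥0∞} (hf : f ≤ s.indicator 1) :
    ∫⁻ x, f x ∂μ ≤ innerMeasure μ s := by
  rw [← iSup_lintegral_measurable_le_eq_lintegral]
  refine iSup₂_le fun g hg => iSup_le fun hgf => ?_
  have hsupp : {x | g x ≠ 0} ⊆ s := fun x hx => by
    by_contra hxs
    exact hx (le_antisymm ((hgf x).trans ((hf x).trans (by simp [hxs]))) bot_le)
  have hmeas : MeasurableSet {x | g x ≠ 0} := hg (measurableSet_singleton 0).compl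
  calc ∫⁻ x, g x ∂μ ≤ ∫⁻ x, {x | g x ≠ 0}.indicator 1 x ∂μ := by
        refine lintegral_mono fun x => ?_
        by_cases hx : g x = 0
        · simp [hx]
        · rw [Set.indicator_of_mem hx]
          refine (hgf x).trans ((hf x).trans ?_)
          unfold Set.indicator
          split_ifs <;> simp
    _ = μ {x | g x ≠ 0} := lintegral_indicator_one hmeas
    _ ≤ innerMeasure μ s := measure_le_innerMeasure hmeas hsupp

lemma innerMeasure_prod_le {ν : Measure β} [SFinite ν] (s : Set α) (t : Set β) :
    innerMeasure (μ.prod ν) (s ×ˢ t) ≤ innerMeasure μ s * innerMeasure ν t := by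
  refine iSup₂_le fun A hA => iSup_le fun hAst => ?_
  set G := {x | ν (Prod.mk x ⁻¹' A) ≠ 0}
  have hG : MeasurableSet G := measurable_measure_prodMk_left hA (measurableSet_singleton 0).compl
  have hGs : G ⊆ s := fun x hx => by
    obtain ⟨y, hy⟩ := nonempty_of_measure_ne_zero hx
    exact (hAst hy).1
  calc μ.prod ν A = ∫⁻ x, ν (Prod.mk x ⁻¹' A) ∂μ := Measure.prod_apply hA
    _ ≤ ∫⁻ x, G.indicator (fun _ => innerMeasure ν t) x ∂μ := by
        refine lintegral_mono fun x => ?_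
        by_cases hx : x ∈ G
        · rw [Set.indicator_of_mem hx]
          exact measure_le_innerMeasure (measurable_prodMk_left hA) fun y hy => (hAst hy).2
        · simp_all [G]
    _ = innerMeasure ν t * μ G := lintegral_indicator_const hG _
    _ ≤ innerMeasure μ s * innerMeasure ν t := by
        rw [mul_comm]
        gcongr
        exact measure_le_innerMeasure hG hGs

end InnerMeasure

section Sequences

variable {α : Type*}

def seqCons (z : α) (ω : ℕ → α) : ℕ → α
  | 0 => z
  | n + 1 => ω n

@[simp] lemma seqCons_zero (z : α) (ω : ℕ → α) : seqCons z ω 0 = z := rfl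

@[simp] lemma seqCons_succ (z : α) (ω : ℕ → α) (n : ℕ) : seqCons z ω (n + 1) = ω n := rfl

def seqPrefix (k : ℕ) (ω : ℕ → α) : Fin k → α := fun i => ω i

variable [MeasurableSpace α]

lemma measurable_seqCons : Measurable fun p : α × (ℕ → α) => seqCons p.1 p.2 := by
  refine measurable_pi_iff.mpr fun n => ?_
  cases n <;> simp only [seqCons_zero, seqCons_succ] <;> fun_prop

lemma measurable_seqPrefix (k : ℕ) : Measurable (seqPrefix (α := α) k) := by
  unfold seqPrefix
  fun_prop

lemma measurePreserving_finAppend (μ : Measure α) [SigmaFinite μ] (a b : ℕ) :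
    MeasurePreserving (fun p : (Fin a → α) × (Fin b → α) => Fin.append p.1 p.2)
      ((Measure.pi fun _ => μ).prod (Measure.pi fun _ => μ)) (Measure.pi fun _ => μ) := by
  have hm : Measurable fun p : (Fin a → α) × (Fin b → α) => Fin.append p.1 p.2 :=
    measurable_pi_iff.mpr fun i => by
      refine Fin.addCases (fun j => ?_) (fun j => ?_) i <;>
        simp only [Fin.append_left, Fin.append_right] <;> fun_prop
  refine ⟨hm, (Measure.pi_eq fun t ht => ?_).symm⟩
  have hpre : (fun p : (Fin a → α) × (Fin b → α) => Fin.append p.1 p.2) ⁻¹' Set.univ.pi t =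
      Set.univ.pi (fun i => t (Fin.castAdd b i)) ×ˢ Set.univ.pi (fun i => t (Fin.natAdd a i)) := by
    ext ⟨u, v⟩
    simp [Fin.forall_fin_add]
  rw [Measure.map_apply hm (.univ_pi ht), hpre, Measure.prod_prod, Measure.pi_pi, Measure.pi_pi,
    Fin.prod_univ_add]

variable (P : Measure α) [IsProbabilityMeasure P]

lemma measurePreserving_seqPrefix (k : ℕ) :
    MeasurePreserving (seqPrefix (α := α) k)
      (Measure.infinitePi fun _ => P) (Measure.pi fun _ => P) := by
  refine ⟨measurable_seqPrefix k, ?_⟩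
  unfold seqPrefix
  rw [Measure.map_infinitePi_infinitePi_of_inj Fin.val_injective, Measure.infinitePi_eq_pi]

lemma measurePreserving_seqCons :
    MeasurePreserving (fun p : α × (ℕ → α) => seqCons p.1 p.2)
      (P.prod (Measure.infinitePi fun _ => P)) (Measure.infinitePi fun _ => P) := by
  refine ⟨measurable_seqCons, Measure.eq_infinitePi _ fun s t ht => ?_⟩
  classical
  have hpre : (fun p : α × (ℕ → α) => seqCons p.1 p.2) ⁻¹' Set.pi s t =
      (if 0 ∈ s then t 0 else Set.univ) ×ˢ
        Set.pi (s.preimage Nat.succ Nat.succ_injective.injOn) (fun n => t (n + 1)) := by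
    ext ⟨z, ω⟩
    simp only [Set.mem_preimage, Set.mem_pi, Finset.mem_coe, Set.mem_prod, Finset.mem_preimage]
    constructor
    · intro h
      refine ⟨?_, fun n hn => h (n + 1) hn⟩
      split_ifs with h0
      exacts [h 0 h0, trivial]
    · rintro ⟨h0, hs⟩ (_ | n) hn
      · simpa [hn] using h0
      · exact hs n hn
  rw [Measure.map_apply measurable_seqCons (.pi s.countable_toSet fun i _ => ht i), hpre,
    Measure.prod_prod, Measure.infinitePi_pi _ fun i _ => ht _,
    Finset.prod_preimage' _ _ _ (fun i => P (t i)),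
    ← Finset.prod_filter_mul_prod_filter_not s (· ∈ Set.range Nat.succ), mul_comm]
  have hzero : ∀ x, x ∉ Set.range Nat.succ ↔ x = 0 := fun x => by cases x <;> simp
  simp only [hzero, Finset.filter_eq']
  split_ifs <;> simp

variable {A : Set (ℕ → α)}

lemma measurable_measure_seqCons_preimage (hA : MeasurableSet A) :
    Measurable fun z => Measure.infinitePi (fun _ => P) (seqCons z ⁻¹' A) :=
  measurable_measure_prodMk_left (hA.preimage measurable_seqCons)

lemma measure_eq_lintegral_seqCons (hA : MeasurableSet A) :
    Measure.infinitePi (fun _ => P) A =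
      ∫⁻ z, Measure.infinitePi (fun _ => P) (seqCons z ⁻¹' A) ∂P := by
  rw [← (measurePreserving_seqCons P).measure_preimage hA.nullMeasurableSet,
    Measure.prod_apply (hA.preimage measurable_seqCons)]
  rfl

end Sequences

end MeasureTheory

lemma le_pow_div_of_submultiplicative {M : Type*} [CommMonoid M] [PartialOrder M]
    [IsOrderedMonoid M] {u : ℕ → M} (hmul : ∀ a b, u (a + b) ≤ u a * u b)
    (hle : ∀ n, u n ≤ 1) (k n : ℕ) : u n ≤ u k ^ (n / k) := by
  have hblocks : ∀ q r, u (k * q + r) ≤ u k ^ q * u r := by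
    intro q r
    induction q with
    | zero => simp
    | succ q ih =>
      calc u (k * (q + 1) + r) = u (k + (k * q + r)) := by ring_nf
        _ ≤ u k * (u k ^ q * u r) := (hmul _ _).trans (by gcongr)
        _ = u k ^ (q + 1) * u r := by rw [pow_succ', mul_assoc]
  calc u n = u (k * (n / k) + n % k) := by rw [Nat.div_add_mod]
    _ ≤ u k ^ (n / k) * u (n % k) := hblocks _ _
    _ ≤ u k ^ (n / k) := mul_le_of_le_one_right' (hle _)

namespace ERM

variable {X : Type*}

def versionSpace {ι : Type*} (V : Set (X → Bool)) (s : ι → X × Bool) : Set (X → Bool) :=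
  {g ∈ V | ∀ i, g (s i).1 = (s i).2}

def IsCenteredEluderSeq (H : Set (X → Bool)) (hstar : X → Bool) (x : ℕ → X) (y : ℕ → Bool) :
    Prop :=
  (∀ i, hstar (x i) = y i) ∧ (∀ n, ∃ h ∈ H, ∀ i < n, h (x i) = y i) ∧
    ∀ k, ∃ h ∈ H, (∀ i < k, h (x i) = y i) ∧ h (x k) ≠ y k

section BadSamples

variable [MeasurableSpace X] (P : Measure (X × Bool)) (V : Set (X → Bool))

def er (h : X → Bool) : ℝ≥0∞ := P {q | h q.1 ≠ q.2}

def badSamples (ι : Type*) : Set (ι → X × Bool) := {s | ∃ h ∈ versionSpace V s, 0 < er P h}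

noncomputable def badProb (n : ℕ) : ℝ≥0∞ :=
  innerMeasure (Measure.pi fun _ : Fin n => P) (badSamples P V (Fin n))

def badSequences : Set (ℕ → X × Bool) := ⋂ k : ℕ, seqPrefix k ⁻¹' badSamples P V (Fin k)

lemma finAppend_preimage_badSamples_subset (a b : ℕ) :
    (fun p : (Fin a → X × Bool) × (Fin b → X × Bool) => Fin.append p.1 p.2) ⁻¹'
        badSamples P V (Fin (a + b)) ⊆
      badSamples P V (Fin a) ×ˢ badSamples P V (Fin b) := by
  rintro ⟨u, v⟩ ⟨h, ⟨hV, hcons⟩, hpos⟩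
  refine ⟨⟨h, ⟨hV, fun i => ?_⟩, hpos⟩, ⟨h, ⟨hV, fun i => ?_⟩, hpos⟩⟩
  · simpa using hcons (Fin.castAdd b i)
  · simpa using hcons (Fin.natAdd a i)

lemma antitone_seqPrefix_preimage_badSamples :
    Antitone fun k => seqPrefix (α := X × Bool) k ⁻¹' badSamples P V (Fin k) :=
  antitone_nat_of_succ_le fun _ _ ⟨h, ⟨hV, hcons⟩, hpos⟩ =>
    ⟨h, ⟨hV, fun i => hcons i.castSucc⟩, hpos⟩

lemma seqCons_preimage_badSequences_subset (z : X × Bool) :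
    seqCons z ⁻¹' badSequences P V ⊆ badSequences P {h ∈ V | h z.1 = z.2} := by
  intro ω hω
  simp only [badSequences, Set.mem_iInter, Set.mem_preimage] at hω ⊢
  intro k
  obtain ⟨h, ⟨hV, hcons⟩, hpos⟩ := hω (k + 1)
  exact ⟨h, ⟨⟨hV, hcons 0⟩, fun i => hcons i.succ⟩, hpos⟩

lemma exists_er_pos_of_innerMeasure_badSequences_pos {μ : Measure (ℕ → X × Bool)}
    (hV : 0 < innerMeasure μ (badSequences P V)) : ∃ h ∈ V, 0 < er P h := by
  obtain ⟨ω, hω⟩ := nonempty_of_innerMeasure_pos hV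
  obtain ⟨h, ⟨hV, -⟩, hpos⟩ := Set.mem_iInter.mp hω 0
  exact ⟨h, hV, hpos⟩

variable [IsProbabilityMeasure P]

lemma lintegral_iSup_er_le_badProb (n : ℕ) :
    ∫⁻ s, ⨆ h ∈ versionSpace V s, er P h ∂(Measure.pi fun _ : Fin n => P) ≤ badProb P V n := by
  refine lintegral_le_innerMeasure fun s => ?_
  by_cases hs : s ∈ badSamples P V (Fin n)
  · rw [Set.indicator_of_mem hs]
    exact iSup₂_le fun _ _ => prob_le_one
  · rw [Set.indicator_of_notMem hs]
    exact iSup₂_le fun h hh => not_lt.mp fun hpos => hs ⟨h, hh, hpos⟩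

lemma badProb_add_le (a b : ℕ) : badProb P V (a + b) ≤ badProb P V a * badProb P V b :=
  ((measurePreserving_finAppend P a b).innerMeasure_le_preimage _).trans <|
    (innerMeasure_mono (finAppend_preimage_badSamples_subset P V a b)).trans
      (innerMeasure_prod_le _ _)

lemma badProb_le_pow_div (k n : ℕ) : badProb P V n ≤ badProb P V k ^ (n / k) :=
  le_pow_div_of_submultiplicative (badProb_add_le P V)
    (fun _ => innerMeasure_le_measure.trans prob_le_one) k n

lemma badProb_le_innerMeasure_seqPrefix_preimage (k : ℕ) :
    badProb P V k ≤
      innerMeasure (Measure.infinitePi fun _ => P) (seqPrefix k ⁻¹' badSamples P V (Fin k)) :=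
  (measurePreserving_seqPrefix P k).innerMeasure_le_preimage _

lemma innerMeasure_badSequences :
    innerMeasure (Measure.infinitePi fun _ => P) (badSequences P V) =
      ⨅ k, innerMeasure (Measure.infinitePi fun _ => P)
        (seqPrefix k ⁻¹' badSamples P V (Fin k)) :=
  (antitone_seqPrefix_preimage_badSamples P V).innerMeasure_iInter

end BadSamples

variable [MeasurableSpace X] {P : Measure (X × Bool)} [IsProbabilityMeasure P]
  {V : Set (X → Bool)} {hstar : X → Bool}

lemma measure_le_mul_of_forall_not_eluding (hcent : ∀ᵐ q ∂P, q.2 = hstar q.1)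
    (hstuck : ∀ z : X × Bool, z.2 = hstar z.1 → (∃ h ∈ V, h z.1 ≠ z.2) →
      innerMeasure (Measure.infinitePi fun _ => P) (badSequences P {h ∈ V | h z.1 = z.2}) = 0)
    {hb : X → Bool} (hbV : hb ∈ V) {A : Set (ℕ → X × Bool)} (hA : MeasurableSet A)
    (hAV : A ⊆ badSequences P V) :
    Measure.infinitePi (fun _ => P) A ≤
      innerMeasure (Measure.infinitePi fun _ => P) (badSequences P V) * (1 - er P hb) := by
  set μ := Measure.infinitePi fun _ : ℕ => P
  set β := innerMeasure μ (badSequences P V)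
  have hsec (z : X × Bool) : seqCons z ⁻¹' A ⊆ badSequences P {h ∈ V | h z.1 = z.2} :=
    (Set.preimage_mono hAV).trans (seqCons_preimage_badSequences_subset P V z)
  have hsecm (z : X × Bool) : MeasurableSet (seqCons z ⁻¹' A) :=
    hA.preimage measurable_seqCons.of_uncurry_left
  obtain ⟨G, hGae, hG, hGcent⟩ := hcent.exists_measurable_mem
  set U := G ∩ {z | μ (seqCons z ⁻¹' A) ≠ 0}
  have hU : MeasurableSet U :=
    hG.inter (measurable_measure_seqCons_preimage P hA (measurableSet_singleton 0).compl)
  have hUV : ∀ z ∈ U, ∀ h ∈ V, h z.1 = z.2 := by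
    rintro z ⟨hzG, hz⟩
    by_contra! hel
    exact hz (le_antisymm ((measure_le_innerMeasure (hsecm z) (hsec z)).trans
      (hstuck z (hGcent z hzG) hel).le) bot_le)
  have hsec_le : ∀ᵐ z ∂P, μ (seqCons z ⁻¹' A) ≤ U.indicator (fun _ => β) z := by
    filter_upwards [hGae] with z hzG
    by_cases hz : μ (seqCons z ⁻¹' A) = 0
    · simp [hz]
    · have hzU : z ∈ U := ⟨hzG, hz⟩
      have hsame : {h ∈ V | h z.1 = z.2} = V := Set.sep_eq_self_iff_mem_true.mpr (hUV z hzU)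
      rw [Set.indicator_of_mem hzU]
      exact measure_le_innerMeasure (hsecm z) (hsame ▸ hsec z)
  have hPU : P U ≤ 1 - er P hb := by
    have her : er P hb ≤ P Uᶜ := measure_mono fun z hz hzU => hz (hUV z hzU hb hbV)
    rw [prob_compl_eq_one_sub hU, ENNReal.le_sub_iff_add_le_right (measure_ne_top P U)
      prob_le_one] at her
    exact (ENNReal.le_sub_iff_add_le_left (measure_ne_top P _) prob_le_one).mpr her
  calc μ A = ∫⁻ z, μ (seqCons z ⁻¹' A) ∂P := measure_eq_lintegral_seqCons P hA
    _ ≤ ∫⁻ z, U.indicator (fun _ => β) z ∂P := lintegral_mono_ae hsec_le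
    _ = β * P U := lintegral_indicator_const hU β
    _ ≤ β * (1 - er P hb) := by gcongr

lemma exists_eluding_point (hcent : ∀ᵐ q ∂P, q.2 = hstar q.1)
    (hV : 0 < innerMeasure (Measure.infinitePi fun _ => P) (badSequences P V)) :
    ∃ z : X × Bool, z.2 = hstar z.1 ∧ (∃ h ∈ V, h z.1 ≠ z.2) ∧
      0 < innerMeasure (Measure.infinitePi fun _ => P) (badSequences P {h ∈ V | h z.1 = z.2}) := by
  by_contra! hstuck
  set β := innerMeasure (Measure.infinitePi fun _ => P) (badSequences P V)
  obtain ⟨hb, hbV, hber⟩ := exists_er_pos_of_innerMeasure_badSequences_pos P V hV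
  have hle : β ≤ β * (1 - er P hb) := iSup₂_le fun A hA => iSup_le fun hAV =>
    measure_le_mul_of_forall_not_eluding hcent (fun z hz hel => nonpos_iff_eq_zero.mp
      (hstuck z hz hel)) hbV hA hAV
  have hlt : β * (1 - er P hb) < β * 1 :=
    ENNReal.mul_lt_mul_right hV.ne' (innerMeasure_le_measure.trans_lt (by simp)).ne
      (ENNReal.sub_lt_self one_ne_top one_ne_zero hber.ne')
  exact (hle.trans_lt hlt).ne (mul_one β).symm

lemma exists_isCenteredEluderSeq (hcent : ∀ᵐ q ∂P, q.2 = hstar q.1) {H : Set (X → Bool)}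
    (hH : 0 < innerMeasure (Measure.infinitePi fun _ => P) (badSequences P H)) :
    ∃ x y, IsCenteredEluderSeq H hstar x y := by
  let Thick := {V : Set (X → Bool) //
    0 < innerMeasure (Measure.infinitePi fun _ => P) (badSequences P V)}
  choose z hzcent hzel hznext using fun V : Thick => exists_eluding_point hcent V.2
  let next (V : Thick) : Thick := ⟨{h ∈ V.1 | h (z V).1 = (z V).2}, hznext V⟩
  let Vs (n : ℕ) : Thick := next^[n] ⟨H, hH⟩
  have hVs : ∀ n, (Vs n).1 ⊆ {h ∈ H | ∀ i < n, h (z (Vs i)).1 = (z (Vs i)).2} := by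
    intro n
    induction n with
    | zero => exact fun h hh => ⟨hh, fun i hi => absurd hi (Nat.not_lt_zero i)⟩
    | succ n ih =>
      intro h hh
      rw [show Vs (n + 1) = next (Vs n) from Function.iterate_succ_apply' next n _] at hh
      obtain ⟨hH, hcons⟩ := ih hh.1
      refine ⟨hH, fun i hi => ?_⟩
      rcases Nat.lt_succ_iff_lt_or_eq.mp hi with hi | rfl
      exacts [hcons i hi, hh.2]
  refine ⟨fun n => (z (Vs n)).1, fun n => (z (Vs n)).2, fun i => (hzcent _).symm,
    fun n => ?_, fun k => ?_⟩
  · obtain ⟨h, hh, -⟩ := exists_er_pos_of_innerMeasure_badSequences_pos P _ (Vs n).2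
    exact ⟨h, (hVs n hh).1, (hVs n hh).2⟩
  · obtain ⟨h, hh, hwrong⟩ := hzel (Vs k)
    exact ⟨h, (hVs k hh).1, (hVs k hh).2, hwrong⟩

end ERM

open ERM in
theorem no_eluder_exponential_rate_general {X : Type*} [MeasurableSpace X]
    (H : Set (X → Bool)) (hstar : X → Bool)
    (hno : ¬ ∃ (x : ℕ → X) (y : ℕ → Bool),
      (∀ i : ℕ, hstar (x i) = y i) ∧
      (∀ n : ℕ, ∃ h ∈ H, ∀ i < n, h (x i) = y i) ∧
      (∀ k : ℕ, ∃ h ∈ H, (∀ i < k, h (x i) = y i) ∧ h (x k) ≠ y k))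
    (P : Measure (X × Bool)) [IsProbabilityMeasure P]
    (hcent : ∀ᵐ q ∂P, q.2 = hstar q.1) :
    ∃ k : ℕ, 0 < k ∧ ∀ n : ℕ,
      ∫⁻ s : Fin n → X × Bool,
          ⨆ h ∈ {g ∈ H | ∀ i : Fin n, g (s i).1 = (s i).2},
            P {q : X × Bool | h q.1 ≠ q.2}
          ∂(Measure.pi fun _ => P)
        ≤ ((2 : ℝ≥0∞)⁻¹) ^ (n / k) := by
  set μ := Measure.infinitePi fun _ : ℕ => P
  obtain ⟨k, hk⟩ : ∃ k, innerMeasure μ (seqPrefix k ⁻¹' badSamples P H (Fin k)) ≤ 2⁻¹ := by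
    by_contra! hbig
    refine hno (exists_isCenteredEluderSeq hcent ?_)
    rw [innerMeasure_badSequences]
    exact (ENNReal.inv_pos.mpr ofNat_ne_top).trans_le (le_iInf fun k => (hbig k).le)
  refine ⟨k + 1, k.succ_pos, fun n => ?_⟩
  calc _ ≤ badProb P H n := lintegral_iSup_er_le_badProb P H n
    _ ≤ badProb P H (k + 1) ^ (n / (k + 1)) := badProb_le_pow_div P H _ _
    _ ≤ 2⁻¹ ^ (n / (k + 1)) := by
        gcongr
        exact (badProb_le_innerMeasure_seqPrefix_preimage P H _).trans
          ((innerMeasure_mono (antitone_seqPrefix_preimage_badSamples P H k.le_succ)).trans hk)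

/-- If `H` has no infinite eluder sequence centered at `h*`, then for every
realizable distribution `P` centered at `h*` there is a finite `k = k(P) > 0` such that
every ERM learner (bounded by the worst-case ERM, whose error is the supremum of errors
over the version space) satisfies `E[er_P(ĥ_n)] ≤ 2^{-⌊n/k⌋}` for all `n`: exponential
rate. -/
theorem no_eluder_exponential_rate {X : Type*} [MeasurableSpace X]
    (H : Set (X → Bool)) (hstar : X → Bool)
    (hno : ¬ ∃ (x : ℕ → X) (y : ℕ → Bool),
      (∀ i : ℕ, hstar (x i) = y i) ∧
      (∀ n : ℕ, ∃ h ∈ H, ∀ i < n, h (x i) = y i) ∧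
      (∀ k : ℕ, ∃ h ∈ H, (∀ i < k, h (x i) = y i) ∧ h (x k) ≠ y k))
    (P : Measure (X × Bool)) [IsProbabilityMeasure P]
    (hcent : ∀ᵐ q ∂P, q.2 = hstar q.1)
    (hrel : ∀ ε : ℝ, 0 < ε → ∃ h ∈ H, (P {q : X × Bool | h q.1 ≠ q.2}).toReal < ε) :
    ∃ k : ℕ, 0 < k ∧ ∀ n : ℕ,
      ∫⁻ s : Fin n → X × Bool,
          ⨆ h ∈ {g ∈ H | ∀ i : Fin n, g (s i).1 = (s i).2},
            P {q : X × Bool | h q.1 ≠ q.2}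
          ∂(Measure.pi fun _ => P)
        ≤ ((2 : ℝ≥0∞)⁻¹) ^ (n / k) :=
  no_eluder_exponential_rate_general H hstar hno P hcent
end
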